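/- arXiv:1407.8443 — 8 statements merged into one kernel-verified Lean document; each statement's English description precedes it below -/
import Mathlib

section
/- For positive integers a, n, m with m ≥ 3 and n ≥ a·2^m: S(n, a·2^m − 1) ≡ a·2^{m−1}·C(n/2 − a·2^{m−2} − 1, a·2^{m−2} − 1) (mod 2^m) if n is even, and S(n, a·2^m − 1) ≡ a·2^{m−1}·C((n+1)/2 − a·2^{m−2} − 2, a·2^{m−2} − 1) + C((n+1)/2 − a·2^{m−2} − 1, a·2^{m−2} − 1) (mod 2^m) if n is odd. -/
/-- Stirling numbers of the second kind -/
def stirling : ℕ → ℕ → ℕ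
  | 0, 0 => 1
  | 0, _ + 1 => 0
  | _ + 1, 0 => 0
  | n + 1, k + 1 => stirling n k + (k + 1) * stirling n (k + 1)

/-!
Over `ZMod (2 ^ m)` the generating function `∑ₙ S(n, k) Xⁿ = Xᵏ / ∏_{j ≤ k} (1 - j X)` can be
inverted explicitly when `k + 1 = a 2ᵐ`. The factors depend on `j` only modulo `2ᵐ`, so the
denominator is the `a`-th power of `∏_{j < 2ᵐ} (1 - j X)`, and pairing `j` with `2ᵐ - j` turns that
into `(1 + 2ᵐ⁻¹ X) ∏_{j < 2ᵐ⁻¹} (1 - j² X²)`. The same pairing, together with the fact that squaring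
lifts a congruence modulo `2ᵐ` to one modulo `2ᵐ⁺¹`, gives
`∏_{j < 2ᵐ⁻¹} (1 - j² X²) = (1 - X²)^{2ᵐ⁻²} (1 + 2ᵐ⁻¹ X²)` by induction on `m ≥ 3`. As
`(2ᵐ⁻¹)² = 0`, the denominator is `(1 - X²)^A (1 + d (X + X²))` with `A = a 2ᵐ⁻²` and
`d = a 2ᵐ⁻¹`; the second factor is its own inverse and
`(1 - X²)^{-A} = ∑ₛ C(A - 1 + s, A - 1) X^{2s}`, so `S(n, k)` is read off as a coefficient.
-/

open Finset PowerSeries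

theorem Finset.prod_range_mul_of_periodic {M : Type*} [CommMonoid M] {f : ℕ → M} {N : ℕ}
    (hf : Function.Periodic f N) (a : ℕ) :
    ∏ j ∈ range (a * N), f j = (∏ j ∈ range N, f j) ^ a := by
  induction a with
  | zero => simp
  | succ a ih =>
    rw [add_one_mul, prod_range_add, ih, pow_succ]
    congr 1
    exact prod_congr rfl fun j _ => by simpa [add_comm] using hf.nat_mul a j

theorem Finset.prod_range_two_mul {M : Type*} [CommMonoid M] (g : ℕ → M) (h : ℕ)
    (hg : g (2 * h) = 1) :
    ∏ j ∈ range (2 * h), g j = g h * ∏ j ∈ range h, (g j * g (2 * h - j)) := by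
  rw [← mul_one (∏ j ∈ range (2 * h), g j), ← hg, ← prod_range_succ,
    show 2 * h + 1 = h + (h + 1) by ring, prod_range_add, prod_range_succ',
    ← prod_range_reflect (fun j => g (h + (j + 1))), prod_mul_distrib]
  have hreflect : ∀ j ∈ range h, g (h + (h - 1 - j + 1)) = g (2 * h - j) := fun j hj => by
    rw [mem_range] at hj
    congr 1
    omega
  rw [prod_congr rfl hreflect, add_zero]
  ac_rfl

noncomputable def stirlingSeries (R : Type*) [CommRing R] (k : ℕ) : R⟦X⟧ :=
  mk fun n => (stirling n k : R)

section CommRing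

variable {R : Type*} [CommRing R]

@[simp]
theorem coeff_stirlingSeries (n k : ℕ) : coeff n (stirlingSeries R k) = stirling n k :=
  coeff_mk _ _

theorem one_sub_mul_stirlingSeries_succ (k : ℕ) :
    (1 - ((k + 1 : ℕ) : R⟦X⟧) * X) * stirlingSeries R (k + 1) = X * stirlingSeries R k := by
  ext (_ | n)
  · simp [stirlingSeries, stirling]
  · rw [sub_mul, one_mul, map_sub, mul_assoc, ← map_natCast C, coeff_C_mul, coeff_succ_X_mul,
      coeff_succ_X_mul]
    simp only [coeff_stirlingSeries, stirling]
    push_cast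
    ring

theorem prod_range_mul_stirlingSeries (k : ℕ) :
    (∏ j ∈ range (k + 1), (1 - (j : R⟦X⟧) * X)) * stirlingSeries R k = X ^ k := by
  induction k with
  | zero => ext (_ | n) <;> simp [stirlingSeries, stirling, coeff_one]
  | succ k ih =>
    rw [prod_range_succ, mul_assoc, one_sub_mul_stirlingSeries_succ, mul_left_comm, ih, pow_succ']

theorem one_add_mul_pow_of_mul_self_eq_zero {c : R} (hc : c * c = 0) (y : R) (a : ℕ) :
    (1 + c * y) ^ a = 1 + a * c * y := by
  induction a with
  | zero => simp
  | succ a ih =>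
    rw [pow_succ, ih]
    push_cast
    linear_combination (a * y ^ 2) * hc

theorem prod_range_two_mul_one_sub_natCast_mul {h : ℕ} (h2 : ((2 * h : ℕ) : R) = 0) (x : R) :
    ∏ j ∈ range (2 * h), (1 - (j : R) * x) =
      (1 + h * x) * ∏ j ∈ range h, (1 - ((j : R) * x) ^ 2) := by
  rw [prod_range_two_mul _ _ (by rw [h2, zero_mul, sub_zero])]
  congr 1
  · have h2' : 2 * (h : R) = 0 := by exact_mod_cast h2
    linear_combination -x * h2'
  · refine prod_congr rfl fun j hj => ?_
    rw [Nat.cast_sub (by rw [mem_range] at hj; omega), h2]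
    ring

theorem PowerSeries.sq_eq_sq_of_map_eq {S : Type*} [CommRing S] (f : R →+* S)
    (hmul : ∀ a b, f a = 0 → f b = 0 → a * b = 0) (htwo : ∀ a, f a = 0 → a + a = 0)
    {p q : R⟦X⟧} (hpq : map f p = map f q) : p ^ 2 = q ^ 2 := by
  have hker : ∀ n, f (coeff n (p - q)) = 0 := fun n => by
    rw [← coeff_map, map_sub, hpq, sub_self, map_zero]
  have hsq : (p - q) * (p - q) = 0 := by
    ext n
    rw [coeff_mul, map_zero]
    exact sum_eq_zero fun i _ => hmul _ _ (hker i.1) (hker i.2)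
  have hdouble : (p - q) + (p - q) = 0 := by
    ext n
    rw [map_add, map_zero]
    exact htwo _ (hker n)
  linear_combination hsq + q * hdouble

theorem one_sub_X_sq_pow_mul_expand_invOneSubPow (A : ℕ) :
    (1 - X ^ 2) ^ A * expand 2 two_ne_zero (invOneSubPow R A : R⟦X⟧) = 1 := by
  rw [← expand_X 2 two_ne_zero, ← map_one (expand 2 two_ne_zero), ← map_sub, ← map_pow,
    ← map_mul, ← invOneSubPow_inv_eq_one_sub_pow, (invOneSubPow R A).inv_val, map_one]

theorem coeff_invOneSubPow {A : ℕ} (hA : 0 < A) (s : ℕ) :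
    coeff s (invOneSubPow R A : R⟦X⟧) = (A - 1 + s).choose (A - 1) := by
  rw [invOneSubPow_val_eq_mk_sub_one_add_choose_of_pos _ _ hA, coeff_mk]

theorem coeff_two_mul_add_one_expand (f : R⟦X⟧) (s : ℕ) :
    coeff (2 * s + 1) (expand 2 two_ne_zero f) = 0 :=
  coeff_expand_of_not_dvd _ _ _ (by omega)

theorem coeff_two_mul_add_one_one_add_C_mul_mul_expand (d : R) (g : R⟦X⟧) (s : ℕ) :
    coeff (2 * s + 1) ((1 + C d * (X + X ^ 2)) * expand 2 two_ne_zero g) = d * coeff s g := by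
  rw [show ∀ f : R⟦X⟧, (1 + C d * (X + X ^ 2)) * f = f + C d * (X * f) + C d * (X * (X * f))
      from fun f => by ring, map_add, map_add, coeff_C_mul, coeff_C_mul, coeff_succ_X_mul,
    coeff_succ_X_mul, coeff_two_mul_add_one_expand, coeff_expand_mul]
  cases s with
  | zero => rw [mul_zero, coeff_zero_X_mul, mul_zero, zero_add, add_zero]
  | succ s =>
    rw [mul_add_one, coeff_succ_X_mul, coeff_two_mul_add_one_expand, mul_zero, zero_add, add_zero]

theorem coeff_two_mul_add_two_one_add_C_mul_mul_expand (d : R) (g : R⟦X⟧) (s : ℕ) :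
    coeff (2 * s + 2) ((1 + C d * (X + X ^ 2)) * expand 2 two_ne_zero g) =
      coeff (s + 1) g + d * coeff s g := by
  rw [show ∀ f : R⟦X⟧, (1 + C d * (X + X ^ 2)) * f = f + C d * (X * f) + C d * (X * (X * f))
      from fun f => by ring, map_add, map_add, coeff_C_mul, coeff_C_mul, coeff_succ_X_mul,
    coeff_succ_X_mul, coeff_two_mul_add_one_expand, coeff_succ_X_mul, coeff_expand_mul,
    ← mul_add_one, coeff_expand_mul, mul_zero, add_zero]

end CommRing

theorem ZMod.dvd_val_of_castHom_eq_zero {n N : ℕ} [NeZero N] (h : n ∣ N) {a : ZMod N}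
    (ha : ZMod.castHom h (ZMod n) a = 0) : n ∣ a.val := by
  rwa [← ZMod.natCast_zmod_val a, map_natCast, ZMod.natCast_eq_zero_iff] at ha

theorem PowerSeries.sq_eq_sq_of_map_castHom_eq {m : ℕ} (hm : 1 ≤ m)
    {p q : (ZMod (2 ^ (m + 1)))⟦X⟧}
    (hpq : map (ZMod.castHom (pow_dvd_pow 2 m.le_succ) (ZMod (2 ^ m))) p =
      map (ZMod.castHom (pow_dvd_pow 2 m.le_succ) (ZMod (2 ^ m))) q) : p ^ 2 = q ^ 2 := by
  have hval {a} := @ZMod.dvd_val_of_castHom_eq_zero _ _ _ (pow_dvd_pow 2 m.le_succ) a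
  refine sq_eq_sq_of_map_eq _ (fun a b ha hb => ?_) (fun a ha => ?_) hpq
  · rw [← ZMod.natCast_zmod_val a, ← ZMod.natCast_zmod_val b, ← Nat.cast_mul,
      ZMod.natCast_eq_zero_iff]
    exact (pow_dvd_pow 2 (by omega)).trans (pow_add 2 m m ▸ mul_dvd_mul (hval ha) (hval hb))
  · rw [← ZMod.natCast_zmod_val a, ← Nat.cast_add, ← two_mul, ZMod.natCast_eq_zero_iff]
    exact (pow_succ' 2 m).dvd.trans (Nat.mul_dvd_mul_left 2 (hval ha))

theorem PowerSeries.natCast_eq_zero_of_dvd {R : Type*} [CommRing R] {n k : ℕ} [CharP R n]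
    (h : n ∣ k) : (k : R⟦X⟧) = 0 := by
  rw [← map_natCast C, (CharP.cast_eq_zero_iff R n k).2 h, map_zero]

theorem prod_range_one_sub_natCast_mul_X_sq (m : ℕ) :
    ∏ j ∈ range (2 ^ (m + 2)), (1 - ((j : (ZMod (2 ^ (m + 3)))⟦X⟧) * X) ^ 2) =
      (1 - X ^ 2) ^ 2 ^ (m + 1) * (1 + ((2 ^ (m + 2) : ℕ) : (ZMod (2 ^ (m + 3)))⟦X⟧) * X ^ 2) := by
  induction m with
  | zero =>
    have h8 := natCast_eq_zero_of_dvd (R := ZMod (2 ^ (0 + 3))) dvd_rfl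
    simp only [Nat.reduceAdd, Nat.reducePow, zero_add, Nat.cast_ofNat, prod_range_succ, range_one,
      prod_singleton, Nat.cast_zero, zero_mul, ne_eq, OfNat.ofNat_ne_zero, not_false_eq_true,
      zero_pow, sub_zero, Nat.cast_one, one_mul, pow_one] at h8 ⊢
    linear_combination (-X ^ 2 * (1 - X ^ 2) ^ 2 - X ^ 2 * (1 - X ^ 2) * (1 - 4 * X ^ 2)) * h8
  | succ m ih =>
    obtain ⟨h, hh⟩ : ∃ h, h = 2 ^ (m + 2) := ⟨_, rfl⟩
    rw [← hh] at ih
    rw [show 2 ^ (m + 1 + 2) = 2 * h by rw [hh]; ring, show 2 ^ (m + 1 + 1) = h from hh.symm]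
    have hzero {k : ℕ} (hk : 2 ^ (m + 4) ∣ k) : (k : (ZMod (2 ^ (m + 1 + 3)))⟦X⟧) = 0 :=
      natCast_eq_zero_of_dvd hk
    have hsq : (h : (ZMod (2 ^ (m + 1 + 3)))⟦X⟧) ^ 2 = 0 := by
      rw [← Nat.cast_pow]
      exact hzero (by rw [hh, ← pow_mul]; exact pow_dvd_pow 2 (by omega))
    have h4 : 4 * (h : (ZMod (2 ^ (m + 1 + 3)))⟦X⟧) = 0 := by
      exact_mod_cast hzero (k := 4 * h) ⟨1, by rw [hh]; ring⟩
    let g (j : ℕ) : (ZMod (2 ^ (m + 1 + 3)))⟦X⟧ := 1 - ((j : (ZMod (2 ^ (m + 1 + 3)))⟦X⟧) * X) ^ 2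
    have hreflect : ∀ j ∈ range h, g j * g (2 * h - j) = g j ^ 2 := fun j hj => by
      simp only [g]
      rw [Nat.cast_sub (by rw [mem_range] at hj; omega)]
      push_cast
      linear_combination g j * ((j : (ZMod (2 ^ (m + 1 + 3)))⟦X⟧) - h) * X ^ 2 * h4
    have hsquare : (∏ j ∈ range h, g j) ^ 2 =
        ((1 - X ^ 2) ^ 2 ^ (m + 1) * (1 + (h : (ZMod (2 ^ (m + 1 + 3)))⟦X⟧) * X ^ 2)) ^ 2 := by
      refine sq_eq_sq_of_map_castHom_eq (m := m + 3) (by omega) ?_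
      simp only [g, map_prod, map_mul, map_sub, map_add, map_one, map_pow, map_natCast, map_X]
      exact ih
    rw [prod_range_two_mul g h (by simp only [g]; push_cast; linear_combination -4 * X ^ 2 * hsq),
      prod_congr rfl hreflect, prod_pow, hsquare]
    simp only [g]
    subst hh
    push_cast at hsq ⊢
    linear_combination ((1 - X ^ 2) ^ 2 ^ (m + 1)) ^ 2 *
      (X ^ 4 - X ^ 2 - 2 ^ (m + 3) * X ^ 4 - 2 ^ (2 * m + 4) * X ^ 6) * hsq

theorem prod_range_one_sub_natCast_mul_X (m a : ℕ) :
    ∏ j ∈ range (a * 2 ^ (m + 3)), (1 - (j : (ZMod (2 ^ (m + 3)))⟦X⟧) * X) =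
      (1 - X ^ 2) ^ (a * 2 ^ (m + 1)) *
        (1 + ((a * 2 ^ (m + 2) : ℕ) : (ZMod (2 ^ (m + 3)))⟦X⟧) * (X + X ^ 2)) := by
  have hzero {k : ℕ} (hk : 2 ^ (m + 3) ∣ k) : (k : (ZMod (2 ^ (m + 3)))⟦X⟧) = 0 :=
    natCast_eq_zero_of_dvd hk
  have hsq : ((2 ^ (m + 2) : ℕ) : (ZMod (2 ^ (m + 3)))⟦X⟧) * (2 ^ (m + 2) : ℕ) = 0 := by
    rw [← Nat.cast_mul, ← pow_add]
    exact hzero (pow_dvd_pow 2 (by omega))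
  have hlin := prod_range_two_mul_one_sub_natCast_mul (hzero (k := 2 * 2 ^ (m + 2)) ⟨1, by ring⟩) X
  rw [← pow_succ'] at hlin
  rw [prod_range_mul_of_periodic (fun j => by rw [Nat.cast_add, hzero dvd_rfl, add_zero]), hlin,
    prod_range_one_sub_natCast_mul_X_sq, mul_left_comm, mul_pow, mul_pow,
    one_add_mul_pow_of_mul_self_eq_zero hsq, one_add_mul_pow_of_mul_self_eq_zero hsq]
  push_cast at hsq ⊢
  linear_combination (1 - X ^ 2) ^ (a * 2 ^ (m + 1)) * (a : (ZMod (2 ^ (m + 3)))⟦X⟧) ^ 2 * X ^ 3 * hsq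

theorem stirlingSeries_eq {m a : ℕ} (ha : 0 < a) :
    stirlingSeries (ZMod (2 ^ (m + 3))) (a * 2 ^ (m + 3) - 1) =
      X ^ (a * 2 ^ (m + 3) - 1) *
        ((1 + ((a * 2 ^ (m + 2) : ℕ) : (ZMod (2 ^ (m + 3)))⟦X⟧) * (X + X ^ 2)) *
          expand 2 two_ne_zero (invOneSubPow (ZMod (2 ^ (m + 3))) (a * 2 ^ (m + 1)) :
            (ZMod (2 ^ (m + 3)))⟦X⟧)) := by
  have hprod := prod_range_mul_stirlingSeries (R := ZMod (2 ^ (m + 3))) (a * 2 ^ (m + 3) - 1)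
  rw [Nat.sub_add_cancel (Nat.one_le_iff_ne_zero.2 (by positivity)),
    prod_range_one_sub_natCast_mul_X] at hprod
  have hd : ((a * 2 ^ (m + 2) : ℕ) : (ZMod (2 ^ (m + 3)))⟦X⟧) * (a * 2 ^ (m + 2) : ℕ) = 0 := by
    rw [← Nat.cast_mul]
    exact natCast_eq_zero_of_dvd ⟨a * a * 2 ^ (m + 1), by ring⟩
  have h2d : ((2 * (a * 2 ^ (m + 2)) : ℕ) : (ZMod (2 ^ (m + 3)))⟦X⟧) = 0 :=
    natCast_eq_zero_of_dvd ⟨a, by ring⟩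
  have hinv : (1 + ((a * 2 ^ (m + 2) : ℕ) : (ZMod (2 ^ (m + 3)))⟦X⟧) * (X + X ^ 2)) ^ 2 = 1 := by
    rw [one_add_mul_pow_of_mul_self_eq_zero hd]
    push_cast at h2d ⊢
    linear_combination (X + X ^ 2) * h2d
  calc _ = ((1 - X ^ 2) ^ (a * 2 ^ (m + 1)) * expand 2 two_ne_zero
          (invOneSubPow (ZMod (2 ^ (m + 3))) (a * 2 ^ (m + 1)) : (ZMod (2 ^ (m + 3)))⟦X⟧)) *
        (1 + ((a * 2 ^ (m + 2) : ℕ) : (ZMod (2 ^ (m + 3)))⟦X⟧) * (X + X ^ 2)) ^ 2 *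
          stirlingSeries (ZMod (2 ^ (m + 3))) (a * 2 ^ (m + 3) - 1) := by
        rw [one_sub_X_sq_pow_mul_expand_invOneSubPow, hinv, one_mul, one_mul]
    _ = _ := by rw [← hprod]; ring

theorem cast_stirling_two_mul_add_one_add {m a : ℕ} (ha : 0 < a) (s : ℕ) :
    (stirling (2 * s + 1 + (a * 2 ^ (m + 3) - 1)) (a * 2 ^ (m + 3) - 1) : ZMod (2 ^ (m + 3))) =
      ((a * 2 ^ (m + 2) * (a * 2 ^ (m + 1) - 1 + s).choose (a * 2 ^ (m + 1) - 1) : ℕ) :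
        ZMod (2 ^ (m + 3))) := by
  rw [← coeff_stirlingSeries, stirlingSeries_eq ha, coeff_X_pow_mul, ← map_natCast C,
    coeff_two_mul_add_one_one_add_C_mul_mul_expand, coeff_invOneSubPow (by positivity)]
  push_cast
  ring

theorem cast_stirling_two_mul_add_two_add {m a : ℕ} (ha : 0 < a) (s : ℕ) :
    (stirling (2 * s + 2 + (a * 2 ^ (m + 3) - 1)) (a * 2 ^ (m + 3) - 1) : ZMod (2 ^ (m + 3))) =
      ((a * 2 ^ (m + 2) * (a * 2 ^ (m + 1) - 1 + s).choose (a * 2 ^ (m + 1) - 1) +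
        (a * 2 ^ (m + 1) - 1 + (s + 1)).choose (a * 2 ^ (m + 1) - 1) : ℕ) :
          ZMod (2 ^ (m + 3))) := by
  rw [← coeff_stirlingSeries, stirlingSeries_eq ha, coeff_X_pow_mul, ← map_natCast C,
    coeff_two_mul_add_two_one_add_C_mul_mul_expand, coeff_invOneSubPow (by positivity),
    coeff_invOneSubPow (by positivity)]
  push_cast
  ring

theorem stirling_mod_pow_two_general (a n m : ℕ) (ha : 0 < a) (hm : 3 ≤ m)
    (hna : a * 2 ^ m ≤ n) :
    (Even n →
      stirling n (a * 2 ^ m - 1) ≡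
        a * 2 ^ (m - 1) * Nat.choose (n / 2 - a * 2 ^ (m - 2) - 1) (a * 2 ^ (m - 2) - 1)
          [MOD 2 ^ m]) ∧
    (Odd n →
      stirling n (a * 2 ^ m - 1) ≡
        a * 2 ^ (m - 1) * Nat.choose ((n + 1) / 2 - a * 2 ^ (m - 2) - 2) (a * 2 ^ (m - 2) - 1)
          + Nat.choose ((n + 1) / 2 - a * 2 ^ (m - 2) - 1) (a * 2 ^ (m - 2) - 1)
          [MOD 2 ^ m]) := by
  obtain ⟨m, rfl⟩ := Nat.exists_eq_add_of_le' hm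
  simp only [show m + 3 - 1 = m + 2 from rfl, show m + 3 - 2 = m + 1 from rfl,
    ← ZMod.natCast_eq_natCast_iff]
  have h4A : a * 2 ^ (m + 3) = 4 * (a * 2 ^ (m + 1)) := by ring
  have hA : 0 < a * 2 ^ (m + 1) := by positivity
  refine ⟨fun he => ?_, fun ho => ?_⟩
  · obtain ⟨s, rfl⟩ : ∃ s, n = 2 * s + 1 + (a * 2 ^ (m + 3) - 1) :=
      ⟨n / 2 - 2 * (a * 2 ^ (m + 1)), by rw [Nat.even_iff] at he; omega⟩
    rw [cast_stirling_two_mul_add_one_add ha,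
      show (2 * s + 1 + (a * 2 ^ (m + 3) - 1)) / 2 - a * 2 ^ (m + 1) - 1 =
        a * 2 ^ (m + 1) - 1 + s by omega]
  · obtain ⟨s, rfl⟩ : ∃ s, n = 2 * s + 2 + (a * 2 ^ (m + 3) - 1) :=
      ⟨(n + 1) / 2 - 2 * (a * 2 ^ (m + 1)) - 1, by rw [Nat.odd_iff] at ho; omega⟩
    rw [cast_stirling_two_mul_add_two_add ha,
      show (2 * s + 2 + (a * 2 ^ (m + 3) - 1) + 1) / 2 - a * 2 ^ (m + 1) - 1 =
        a * 2 ^ (m + 1) - 1 + (s + 1) by omega,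
      show (2 * s + 2 + (a * 2 ^ (m + 3) - 1) + 1) / 2 - a * 2 ^ (m + 1) - 2 =
        a * 2 ^ (m + 1) - 1 + s by omega]

theorem stirling_mod_pow_two (a n m : ℕ) (ha : 0 < a) (hn : 0 < n) (hm : 3 ≤ m)
    (hna : a * 2 ^ m ≤ n) :
    (Even n →
      stirling n (a * 2 ^ m - 1) ≡
        a * 2 ^ (m - 1) * Nat.choose (n / 2 - a * 2 ^ (m - 2) - 1) (a * 2 ^ (m - 2) - 1)
          [MOD 2 ^ m]) ∧
    (Odd n →
      stirling n (a * 2 ^ m - 1) ≡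
        a * 2 ^ (m - 1) * Nat.choose ((n + 1) / 2 - a * 2 ^ (m - 2) - 2) (a * 2 ^ (m - 2) - 1)
          + Nat.choose ((n + 1) / 2 - a * 2 ^ (m - 2) - 1) (a * 2 ^ (m - 2) - 1)
          [MOD 2 ^ m]) :=
  stirling_mod_pow_two_general a n m ha hm hna
end

section
/- For all positive integers k₁, k₂ and n, the convolution identity S(n, k₁ + k₂) = (k₁! · k₂! / (k₁ + k₂)!) · Σ_{i=k₁}^{n−k₂} C(n,i) · S(i, k₁) · S(n−i, k₂) holds. -/
private def fS (n k : ℕ) : ℕ := k.factorial * stirling n k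

private lemma stirling_eq_zero : ∀ {n k : ℕ}, n < k → stirling n k = 0
  | 0, k+1, _ => rfl
  | n+1, k+1, h => by
      have h1 : stirling n k = 0 := stirling_eq_zero (by omega)
      have h2 : stirling n (k+1) = 0 := stirling_eq_zero (by omega)
      simp [stirling, h1, h2]

private lemma fS_zero (k : ℕ) : fS 0 k = if k = 0 then 1 else 0 := by
  cases k with
  | zero => rfl
  | succ k => simp [fS, stirling]

private lemma fS_succ (n k : ℕ) : fS (n+1) k = k * (fS n (k-1) + fS n k) := by
  cases k with
  | zero => simp [fS, stirling]
  | succ k =>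
      simp only [fS, stirling, Nat.factorial_succ, Nat.add_sub_cancel]
      ring

private lemma key : ∀ n a b : ℕ,
    fS n (a + b) = ∑ i ∈ Finset.range (n+1), n.choose i * fS i a * fS (n-i) b := by
  intro n
  induction n with
  | zero =>
      intro a b
      rcases a with _ | a <;> rcases b with _ | b <;> simp [fS_zero]
  | succ n ih =>
      intro a b
      have S1 := ih (a-1) b
      have S2 := ih a b
      have S3 := ih a (b-1)
      have hP : ∑ j ∈ Finset.range (n+1), n.choose j * fS (j+1) a * fS (n-j) b
          = a * ((∑ j ∈ Finset.range (n+1), n.choose j * fS j (a-1) * fS (n-j) b)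
               + ∑ j ∈ Finset.range (n+1), n.choose j * fS j a * fS (n-j) b) := by
        rw [mul_add, Finset.mul_sum, Finset.mul_sum, ← Finset.sum_add_distrib]
        refine Finset.sum_congr rfl fun j hj => ?_
        rw [fS_succ]
        ring
      have hQ : ∑ i ∈ Finset.range (n+1), n.choose i * fS i a * fS (n+1-i) b
          = b * ((∑ j ∈ Finset.range (n+1), n.choose j * fS j a * fS (n-j) (b-1))
               + ∑ j ∈ Finset.range (n+1), n.choose j * fS j a * fS (n-j) b) := by
        rw [mul_add, Finset.mul_sum, Finset.mul_sum, ← Finset.sum_add_distrib]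
        refine Finset.sum_congr rfl fun j hj => ?_
        have hjn : j ≤ n := Nat.lt_succ_iff.mp (Finset.mem_range.mp hj)
        have hrw : n + 1 - j = (n - j) + 1 := by omega
        rw [hrw, fS_succ]
        ring
      have hV1 : ∑ i ∈ Finset.range (n+2), n.choose i * fS i a * fS (n+1-i) b
          = ∑ i ∈ Finset.range (n+1), n.choose i * fS i a * fS (n+1-i) b := by
        rw [Finset.sum_range_succ]
        simp [Nat.choose_succ_self]
      have hV2 : ∑ i ∈ Finset.range (n+2), n.choose i * fS i a * fS (n+1-i) b
          = (∑ j ∈ Finset.range (n+1), n.choose (j+1) * fS (j+1) a * fS (n-j) b)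
            + fS 0 a * fS (n+1) b := by
        rw [Finset.sum_range_succ' (fun i => n.choose i * fS i a * fS (n+1-i) b) (n+1)]
        congr 1
        · refine Finset.sum_congr rfl fun j hj => ?_
          have hrw : n + 1 - (j + 1) = n - j := by omega
          rw [hrw]
        · simp
      have hsplit : ∑ i ∈ Finset.range (n+2), (n+1).choose i * fS i a * fS (n+1-i) b
          = (∑ j ∈ Finset.range (n+1), n.choose j * fS (j+1) a * fS (n-j) b)
            + ∑ i ∈ Finset.range (n+1), n.choose i * fS i a * fS (n+1-i) b := by
        rw [Finset.sum_range_succ' (fun i => (n+1).choose i * fS i a * fS (n+1-i) b) (n+1)]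
        rw [← hV1, hV2, ← add_assoc, ← Finset.sum_add_distrib]
        congr 1
        · refine Finset.sum_congr rfl fun j hj => ?_
          have hrw : n + 1 - (j + 1) = n - j := by omega
          simp only [hrw, Nat.choose_succ_succ]
          ring
        · simp
      calc fS (n+1) (a+b)
          = (a+b) * (fS n (a+b-1) + fS n (a+b)) := fS_succ n (a+b)
        _ = a * fS n ((a-1)+b) + b * fS n (a+(b-1)) + (a+b) * fS n (a+b) := by
            rcases Nat.eq_zero_or_pos a with ha | ha <;>
              rcases Nat.eq_zero_or_pos b with hb | hb
            · subst ha; subst hb; ring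
            · subst ha
              rw [show 0 + b - 1 = 0 + (b - 1) by omega]; ring
            · subst hb
              rw [show a + 0 - 1 = (a - 1) + 0 by omega]; ring
            · rw [show (a-1)+b = a+b-1 by omega, show a+(b-1) = a+b-1 by omega]
              ring
        _ = ∑ i ∈ Finset.range (n+2), (n+1).choose i * fS i a * fS (n+1-i) b := by
            rw [hsplit, hP, hQ, ← S1, ← S2, ← S3]
            ring

theorem stirling_convolution (k₁ k₂ n : ℕ) (h1 : 0 < k₁) (h2 : 0 < k₂) (hn : 0 < n) :
    (k₁ + k₂).factorial * stirling n (k₁ + k₂) =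
      k₁.factorial * k₂.factorial *
        ∑ i ∈ Finset.Icc k₁ (n - k₂),
          n.choose i * stirling i k₁ * stirling (n - i) k₂ := by
  have h := key n k₁ k₂
  have hsum : ∑ i ∈ Finset.range (n+1), n.choose i * fS i k₁ * fS (n-i) k₂
      = k₁.factorial * k₂.factorial *
        ∑ i ∈ Finset.range (n+1), n.choose i * stirling i k₁ * stirling (n-i) k₂ := by
    rw [Finset.mul_sum]
    refine Finset.sum_congr rfl fun i hi => ?_
    simp only [fS]; ring
  have hsub : Finset.Icc k₁ (n - k₂) ⊆ Finset.range (n+1) := by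
    intro i hi
    simp only [Finset.mem_Icc] at hi
    simp only [Finset.mem_range]
    omega
  have hrestrict : ∑ i ∈ Finset.range (n+1), n.choose i * stirling i k₁ * stirling (n-i) k₂
      = ∑ i ∈ Finset.Icc k₁ (n - k₂), n.choose i * stirling i k₁ * stirling (n-i) k₂ := by
    rw [Finset.sum_subset hsub]
    intro i hi hni
    simp only [Finset.mem_range] at hi
    simp only [Finset.mem_Icc, not_and_or, not_le] at hni
    rcases hni with hlt | hgt
    · rw [stirling_eq_zero hlt]; ring
    · have hz : n - i < k₂ := by omega
      rw [stirling_eq_zero hz]; ring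
  calc (k₁ + k₂).factorial * stirling n (k₁ + k₂) = fS n (k₁ + k₂) := rfl
    _ = _ := h
    _ = _ := by rw [hsum, hrestrict]
end

section
/- Let c, i, s be positive integers with c odd, 1 ≤ i < c·2^s and ν₂(i) < s. Then ν₂(C(c·2^s, i)) ≥ s − ν₂(i), with equality if and only if s₂(c − 1 − ⌊i/2^s⌋) + s₂(⌊i/2^s⌋) = s₂(c − 1). -/
/-- binary digit sum -/
def s2 (n : ℕ) : ℕ := (Nat.digits 2 n).sum

lemma s2_bit (n b : ℕ) (hb : b < 2) : s2 (2 * n + b) = s2 n + b := by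
  rcases Nat.eq_zero_or_pos n with h0 | h0
  · subst h0; interval_cases b <;> simp [s2]
  · have h2 : (1:ℕ) < 2 := one_lt_two
    rw [s2, Nat.digits_def' h2 (by omega)]
    have hm : (2 * n + b) % 2 = b := by omega
    have hd : (2 * n + b) / 2 = n := by omega
    rw [hm, hd, List.sum_cons, s2, Nat.add_comm]

lemma s2_shift (s : ℕ) : ∀ q r : ℕ, r < 2 ^ s → s2 (q * 2 ^ s + r) = s2 q + s2 r := by
  induction s with
  | zero => intro q r hr; interval_cases r; simp [s2]
  | succ s ih =>
    intro q r hr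
    have hr2 : r / 2 < 2 ^ s := by
      have : 2 ^ (s + 1) = 2 * 2 ^ s := by rw [pow_succ]; ring
      omega
    have key : q * 2 ^ (s + 1) + r = 2 * (q * 2 ^ s + r / 2) + r % 2 := by
      have : 2 ^ (s + 1) = 2 * 2 ^ s := by rw [pow_succ]; ring
      have h2 := Nat.div_add_mod r 2
      nlinarith [Nat.div_add_mod r 2]
    rw [key, s2_bit _ _ (Nat.mod_lt _ two_pos), ih q (r / 2) hr2]
    have : s2 r = s2 (r / 2) + r % 2 := by
      rw [← s2_bit (r / 2) (r % 2) (Nat.mod_lt _ two_pos)]; congr 1; omega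
    omega

lemma s2_zero : s2 0 = 0 := by simp [s2]

lemma s2_pow_mul (k m : ℕ) : s2 (2 ^ k * m) = s2 m := by
  have := s2_shift k m 0 (by positivity)
  rw [add_zero, s2_zero, add_zero, mul_comm] at this
  exact this

lemma s2_compl : ∀ t a : ℕ, a < 2 ^ t → s2 a + s2 (2 ^ t - 1 - a) = t := by
  intro t
  induction t with
  | zero => intro a ha; interval_cases a; simp [s2]
  | succ t ih =>
    intro a ha
    have hp : 2 ^ (t + 1) = 2 * 2 ^ t := by rw [pow_succ]; ring
    have ha2 : a / 2 < 2 ^ t := by omega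
    have e1 : a = 2 * (a / 2) + a % 2 := by omega
    have e2 : 2 ^ (t + 1) - 1 - a = 2 * (2 ^ t - 1 - a / 2) + (1 - a % 2) := by omega
    rw [e2, s2_bit _ _ (by omega)]
    have h := ih (a / 2) ha2
    have h' := s2_bit (a / 2) (a % 2) (Nat.mod_lt _ two_pos)
    rw [← e1] at h'
    omega

lemma s2_compl_odd (t m : ℕ) (hm : Odd m) (hmt : m < 2 ^ t) :
    s2 m + s2 (2 ^ t - m) = t + 1 := by
  obtain ⟨k, hk⟩ := hm
  have h1 : s2 m = s2 k + 1 := by rw [hk]; exact s2_bit k 1 one_lt_two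
  have h2 : 2 ^ t - m = 2 ^ t - 1 - (2 * k) := by omega
  have h3 : s2 (2 * k) = s2 k := by simpa using s2_bit k 0 two_pos
  have h4 := s2_compl t (2 * k) (by omega)
  rw [h1, h2]
  omega

lemma kummer (n k : ℕ) (h : k ≤ n) :
    padicValNat 2 (n.choose k) + s2 n = s2 k + s2 (n - k) := by
  rcases Nat.eq_zero_or_pos n with h0 | h0
  · have hk0 : k = 0 := by omega
    subst hk0; subst h0; simp [s2]
  have l1 := sub_one_mul_padicValNat_factorial (p := 2) n
  have l2 := sub_one_mul_padicValNat_factorial (p := 2) k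
  have l3 := sub_one_mul_padicValNat_factorial (p := 2) (n - k)
  simp only [show (2:ℕ) - 1 = 1 from rfl, one_mul] at l1 l2 l3
  have hmul : n.factorial = n.choose k * (k.factorial * (n - k).factorial) := by
    rw [← mul_assoc]
    exact (Nat.choose_mul_factorial_mul_factorial h).symm
  have hcne : n.choose k ≠ 0 := (Nat.choose_pos h).ne'
  have hv : padicValNat 2 n.factorial =
      padicValNat 2 (n.choose k) +
        (padicValNat 2 k.factorial + padicValNat 2 (n - k).factorial) := by
    rw [hmul, padicValNat.mul hcne (by positivity),
      padicValNat.mul (Nat.factorial_ne_zero k) (Nat.factorial_ne_zero (n - k))]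
  have d1 := Nat.digit_sum_le 2 n
  have d2 := Nat.digit_sum_le 2 k
  have d3 := Nat.digit_sum_le 2 (n - k)
  simp only [s2]
  omega

lemma s2_subadd (a b : ℕ) : s2 (a + b) ≤ s2 a + s2 b := by
  have := kummer (a + b) a (Nat.le_add_right a b)
  simp only [Nat.add_sub_cancel_left] at this
  omega

theorem val_choose_ge (c i s : ℕ) (hc : 0 < c) (hcodd : Odd c) (hi : 1 ≤ i)
    (his : i < c * 2 ^ s) (hs : 0 < s) (hv : padicValNat 2 i < s) :
    s - padicValNat 2 i ≤ padicValNat 2 ((c * 2 ^ s).choose i) ∧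
    (padicValNat 2 ((c * 2 ^ s).choose i) = s - padicValNat 2 i ↔
      s2 (c - 1 - i / 2 ^ s) + s2 (i / 2 ^ s) = s2 (c - 1)) := by
  set v := padicValNat 2 i with hvdef
  set t := s - v with htdef
  have hts : s = v + t := by omega
  have ht1 : 1 ≤ t := by omega
  obtain ⟨m, hm⟩ : 2 ^ v ∣ i := pow_padicValNat_dvd
  have hnd : ¬ 2 ^ (v + 1) ∣ i := pow_succ_padicValNat_not_dvd (p := 2) (by omega)
  have hmodd : Odd m := by
    rcases Nat.even_or_odd m with he | ho
    · exfalso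
      obtain ⟨w, hw⟩ := he
      exact hnd ⟨w, by rw [hm, hw]; ring⟩
    · exact ho
  set q := i / 2 ^ s with hqdef
  set r := m % 2 ^ t with hrdef
  have hrlt : r < 2 ^ t := Nat.mod_lt _ (by positivity)
  have hmq : m = m / 2 ^ t * 2 ^ t + r := (Nat.div_add_mod' m (2 ^ t)).symm
  have hrodd : Odd r := by
    rw [Nat.odd_iff] at hmodd ⊢
    rw [hrdef, Nat.mod_mod_of_dvd m (dvd_pow_self 2 (by omega))]
    exact hmodd
  have hrpos : 1 ≤ r := hrodd.pos
  have hq_eq : q = m / 2 ^ t := by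
    rw [hqdef, hm, hts, pow_add, Nat.mul_div_mul_left _ _ (by positivity)]
  have hi_eq : i = q * 2 ^ s + 2 ^ v * r := by
    rw [hm, hq_eq, hts, pow_add]
    conv_lhs => rw [hmq]
    ring
  have hBpos : 0 < 2 ^ v * r := by positivity
  have hBlt : 2 ^ v * r < 2 ^ s := by
    rw [hts, pow_add]
    have h0 : (0:ℕ) < 2 ^ v := pow_pos two_pos v
    nlinarith
  have hqc : q + 1 ≤ c := by
    have h1 : q * 2 ^ s ≤ i := Nat.div_mul_le_self i _
    have := Nat.lt_of_mul_lt_mul_right (h1.trans_lt his)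
    omega
  have hce : c * 2 ^ s = (c - 1 - q) * 2 ^ s + q * 2 ^ s + 2 ^ s := by
    have hcq : c = (c - 1 - q) + q + 1 := by omega
    conv_lhs => rw [hcq]
    ring
  have hni : c * 2 ^ s - i = (c - 1 - q) * 2 ^ s + (2 ^ s - 2 ^ v * r) := by omega
  have h2 : 2 ^ s - 2 ^ v * r = 2 ^ v * (2 ^ t - r) := by
    have h3 : 2 ^ v * (2 ^ t - r) + 2 ^ v * r = 2 ^ s := by
      rw [← mul_add, Nat.sub_add_cancel hrlt.le, hts, pow_add]
    omega
  have hs2i : s2 i = s2 q + s2 r := by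
    rw [hm, s2_pow_mul, hq_eq]
    conv_lhs => rw [hmq]
    exact s2_shift t _ r hrlt
  have hs2ni : s2 (c * 2 ^ s - i) = s2 (c - 1 - q) + s2 (2 ^ t - r) := by
    have hlt : 2 ^ s - 2 ^ v * r < 2 ^ s := by omega
    rw [hni, s2_shift s _ _ hlt, h2, s2_pow_mul]
  have hs2n : s2 (c * 2 ^ s) = s2 (c - 1) + 1 := by
    rw [mul_comm, s2_pow_mul]
    obtain ⟨k, hk⟩ := hcodd
    have e1 : c = 2 * k + 1 := by omega
    have e2 : c - 1 = 2 * k + 0 := by omega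
    rw [e1, s2_bit k 1 one_lt_two]
    have e3 : 2 * k + 1 - 1 = 2 * k + 0 := by omega
    rw [e3, s2_bit k 0 two_pos]
  have hcomp := s2_compl_odd t r hrodd hrlt
  have hkum := kummer (c * 2 ^ s) i his.le
  have hsub : s2 (c - 1) ≤ s2 (c - 1 - q) + s2 q := by
    have h := s2_subadd (c - 1 - q) q
    have e : c - 1 - q + q = c - 1 := by omega
    rw [e] at h
    exact h
  refine ⟨?_, ?_⟩ <;> omega
end

section
/- For m ≥ 3, the polynomial congruence Π_{i=1}^{2^{m−1}} (1 − (2i−1)x) ≡ (1 + 3x²)^{2^{m−2}} (mod 2^{m+1}) holds, i.e. all coefficients of the difference are divisible by 2^{m+1}. -/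
/-!
Write `P n = ∏_{i<n} (1 - (2i+1)X)`. The odd numbers below `4n` are those below `2n` together
with their shifts by `2n`, so `P (2n) = P n * ∏_{i<n} (1 - (2i+1)X + c)` with `c = -2nX`.
Shifting every factor by `c` changes a block of four consecutive factors only modulo `(4c, c²)`,
because the linear term in `c` is the third elementary symmetric function of the block, which is
divisible by `4`. Hence for `4 ∣ n` we get `P (2n) ≡ P n ^ 2 (mod 8n)`. Squaring turns a
congruence modulo `2^(m+1)` into one modulo `2^(m+2)`, and the induction starts from
`P 4 ≡ (1 + 3X²)² (mod 16)`.
-/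

open Polynomial Finset

theorem four_mul_dvd_sq_sub_sq {R : Type*} [CommRing R] {d x y : R} (h : 2 * d ∣ x - y) :
    4 * d ∣ x ^ 2 - y ^ 2 := by
  obtain ⟨w, hw⟩ := h
  exact ⟨w * (d * w + y), by linear_combination (x + y + 2 * d * w) * hw⟩

theorem prod_Icc_one_natCast_eq_prod_range {M : Type*} [CommMonoid M] (f : ℤ → M) (n : ℕ) :
    ∏ i ∈ Icc (1 : ℤ) n, f i = ∏ i ∈ range n, f (i + 1) := by
  induction n with
  | zero => simp
  | succ n ih =>
    rw [Nat.cast_succ, ← insert_Icc_right_eq_Icc_add_one (by omega), prod_insert (by simp), ih,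
      prod_range_succ, mul_comm]

/-- The coefficient of `4c` is `e₃` of the four factors divided by `4`, written in terms of the
centre `y + 3` of the progression `y, y + 2, y + 4, y + 6`. -/
theorem prod_range_four_add_sub_prod_mem_span {R : Type*} [CommRing R] (y : R) (c : R[X]) :
    ∏ i ∈ range 4, (1 - C (y + 2 * i) * X + c) - ∏ i ∈ range 4, (1 - C (y + 2 * i) * X) ∈
      Ideal.span {4 * c, c ^ 2} := by
  rw [Ideal.mem_span_pair]
  simp only [prod_range_succ, prod_range_zero, Nat.cast_zero, Nat.cast_one, Nat.cast_ofNat]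
  set L : ℕ → R[X] := fun i => 1 - C (y + 2 * i) * X
  refine ⟨1 - C (3 * (y + 3)) * X + C (3 * (y + 3) ^ 2 - 5) * X ^ 2 -
      C ((y + 3) ^ 3 - 5 * (y + 3)) * X ^ 3,
    L 0 * L 1 + L 0 * L 2 + L 0 * L 3 + L 1 * L 2 + L 1 * L 3 + L 2 * L 3 +
      c * (L 0 + L 1 + L 2 + L 3) + c ^ 2, ?_⟩
  simp only [L, map_add, map_sub, map_mul, map_pow, map_ofNat, map_zero, map_one, Nat.cast_zero,
    Nat.cast_one, Nat.cast_ofNat]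
  ring

noncomputable def oddLinearProd (n : ℕ) : ℤ[X] := ∏ i ∈ range n, (1 - C (2 * i + 1 : ℤ) * X)

theorem prod_add_sub_oddLinearProd_mem_span (t : ℕ) (c : ℤ[X]) :
    ∏ i ∈ range (4 * t), (1 - C (2 * i + 1 : ℤ) * X + c) - oddLinearProd (4 * t) ∈
      Ideal.span {4 * c, c ^ 2} := by
  rw [← Ideal.Quotient.eq]
  induction t with
  | zero => simp [oddLinearProd]
  | succ t ih =>
    have hblock := prod_range_four_add_sub_prod_mem_span (8 * t + 1 : ℤ) c
    rw [← Ideal.Quotient.eq] at hblock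
    have hindex (i : ℕ) : 2 * ((4 * t + i : ℕ) : ℤ) + 1 = 8 * t + 1 + 2 * i := by push_cast; ring
    simp only [oddLinearProd, mul_add, mul_one, prod_range_add, map_mul, hindex] at ih ⊢
    rw [ih, hblock]

theorem oddLinearProd_two_mul (n : ℕ) :
    oddLinearProd (2 * n) =
      oddLinearProd n * ∏ i ∈ range n, (1 - C (2 * i + 1 : ℤ) * X + -C (2 * n : ℤ) * X) := by
  rw [oddLinearProd, two_mul, prod_range_add]
  congr 1
  refine prod_congr rfl fun i _ => ?_
  simp only [Nat.cast_add, map_add, map_mul, map_ofNat, map_natCast, map_one]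
  ring

theorem C_dvd_oddLinearProd_two_mul_sub_sq {n : ℕ} (hn : 4 ∣ n) :
    C (8 * n : ℤ) ∣ oddLinearProd (2 * n) - oddLinearProd n ^ 2 := by
  obtain ⟨t, rfl⟩ := hn
  set c : ℤ[X] := -C (2 * (4 * t : ℕ) : ℤ) * X
  have hle : Ideal.span {4 * c, c ^ 2} ≤ Ideal.span {C (8 * (4 * t : ℕ) : ℤ)} := by
    rw [Ideal.span_le, Set.insert_subset_iff, Set.singleton_subset_iff, SetLike.mem_coe,
      SetLike.mem_coe, Ideal.mem_span_singleton, Ideal.mem_span_singleton]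
    constructor
    · exact ⟨-X, by simp only [c, map_mul, map_ofNat]; ring⟩
    · refine ⟨C (2 * t : ℤ) * X ^ 2, ?_⟩
      simp only [c, Nat.cast_mul, Nat.cast_ofNat, map_mul, map_ofNat, map_natCast]
      ring
  rw [← Ideal.mem_span_singleton, oddLinearProd_two_mul, sq, ← mul_sub]
  exact Ideal.mul_mem_left _ _ (hle (prod_add_sub_oddLinearProd_mem_span t c))

theorem C_dvd_oddLinearProd_sub (j : ℕ) :
    C (2 ^ (j + 4) : ℤ) ∣ oddLinearProd (2 ^ (j + 2)) - (1 + C 3 * X ^ 2) ^ 2 ^ (j + 1) := by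
  induction j with
  | zero =>
    refine ⟨-X + 5 * X ^ 2 - 11 * X ^ 3 + 6 * X ^ 4, ?_⟩
    norm_num [oddLinearProd, prod_range_succ]
    ring
  | succ j ih =>
    set n := 2 ^ (j + 2)
    have hn : 2 ^ (j + 1 + 2) = 2 * n := by ring
    have hQ : ((1 : ℤ[X]) + C 3 * X ^ 2) ^ 2 ^ (j + 1 + 1) =
        ((1 + C 3 * X ^ 2) ^ 2 ^ (j + 1)) ^ 2 := by
      rw [← pow_mul, ← pow_succ]
    have h8 : C ((2 : ℤ) ^ (j + 1 + 4)) = C (8 * n : ℤ) := by congr 1; push_cast [n]; ring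
    have h4 : C ((2 : ℤ) ^ (j + 1 + 4)) = 4 * C (2 ^ (j + 3)) := by
      rw [← map_ofNat C 4, ← C_mul]; congr 1; ring
    have h2 : C ((2 : ℤ) ^ (j + 4)) = 2 * C (2 ^ (j + 3)) := by
      rw [← map_ofNat C 2, ← C_mul]; congr 1; ring
    rw [hn, hQ, ← sub_add_sub_cancel _ (oddLinearProd n ^ 2)]
    exact dvd_add (h8 ▸ C_dvd_oddLinearProd_two_mul_sub_sq ⟨2 ^ j, by ring⟩)
      (h4 ▸ four_mul_dvd_sq_sub_sq (h2 ▸ ih))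

open Polynomial in
theorem prod_odd_linear_congr (m : ℕ) (hm : 3 ≤ m) :
    ∀ k : ℕ, (2 ^ (m + 1) : ℤ) ∣
      ((∏ i ∈ Finset.Icc 1 (2 ^ (m - 1)), (1 - C (2 * (i : ℤ) - 1) * X)) -
        (1 + C (3 : ℤ) * X ^ 2) ^ (2 ^ (m - 2))).coeff k := by
  obtain ⟨j, rfl⟩ : ∃ j, m = j + 3 := ⟨m - 3, by omega⟩
  have hprod : ∏ i ∈ Icc 1 (2 ^ (j + 3 - 1)), (1 - C (2 * (i : ℤ) - 1) * X) =
      oddLinearProd (2 ^ (j + 2)) := by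
    rw [show (2 : ℤ) ^ (j + 3 - 1) = (2 ^ (j + 2) : ℕ) by push_cast; rfl,
      prod_Icc_one_natCast_eq_prod_range]
    refine prod_congr rfl fun i _ => ?_
    ring_nf
  rw [← C_dvd_iff_dvd_coeff, hprod]
  exact C_dvd_oddLinearProd_sub j
end

section
/- For m ≥ 4, the polynomial congruence Π_{i=1}^{2^{m−1}−1} (1 − 2i·x) ≡ 1 + 2^{m−1}x + 2^{m−1}x² + 2^m x⁴ (mod 2^{m+1}) holds, i.e. all coefficients of the difference are divisible by 2^{m+1}. -/
open Polynomial Finset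

noncomputable def fct (j : ℕ) : ℤ[X] := 1 - C (2 * (j : ℤ)) * X
noncomputable def pp (n : ℕ) : ℤ[X] := ∏ j ∈ range n, fct j
noncomputable def gg (n : ℕ) : ℤ[X] := ∑ j ∈ range n, ∏ k ∈ (range n).erase j, fct k

lemma step_p (n : ℕ) : pp (n+1) = pp n * fct n := Finset.prod_range_succ _ _

lemma step_g (n : ℕ) : gg (n+1) = fct n * gg n + pp n := by
  unfold gg pp
  rw [Finset.range_add_one, Finset.sum_insert Finset.notMem_range_self,
    Finset.erase_insert Finset.notMem_range_self]
  have hs : ∑ j ∈ range n, ∏ k ∈ (insert n (range n)).erase j, fct k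
      = fct n * ∑ j ∈ range n, ∏ k ∈ (range n).erase j, fct k := by
    rw [Finset.mul_sum]
    refine Finset.sum_congr rfl fun j hj => ?_
    rw [Finset.erase_insert_of_ne (fun h => Finset.notMem_range_self (h ▸ hj)),
      Finset.prod_insert (fun h => Finset.notMem_range_self (Finset.mem_of_mem_erase h))]
  rw [hs]; ring

lemma qq (c : ℤ[X]) : ∀ n, ∃ r, ∏ j ∈ range n, (fct j + c) = pp n + c * gg n + c^2 * r := by
  intro n
  induction n with
  | zero => exact ⟨0, by simp [pp, gg]⟩
  | succ n ih =>
    obtain ⟨r, hr⟩ := ih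
    exact ⟨gg n + r * fct n + c * r, by
      rw [Finset.prod_range_succ, hr, step_p, step_g]; ring⟩

lemma chain_p (n : ℕ) : pp (n+8) = (fct n * fct (n+1) * fct (n+2) * fct (n+3) * fct (n+4) * fct (n+5) * fct (n+6) * fct (n+7)) * pp n := by
  simp only [show n+8 = n+7+1 from rfl, show n+7 = n+6+1 from rfl, show n+6 = n+5+1 from rfl,
    show n+5 = n+4+1 from rfl, show n+4 = n+3+1 from rfl, show n+3 = n+2+1 from rfl,
    show n+2 = n+1+1 from rfl, step_p]
  ring

lemma chain_g (n : ℕ) : gg (n+8) = (fct n * fct (n+1) * fct (n+2) * fct (n+3) * fct (n+4) * fct (n+5) * fct (n+6) * fct (n+7)) * gg n + ((fct (n+1) * fct (n+2) * fct (n+3) * fct (n+4) * fct (n+5) * fct (n+6) * fct (n+7)) + (fct n * fct (n+2) * fct (n+3) * fct (n+4) * fct (n+5) * fct (n+6) * fct (n+7)) + (fct n * fct (n+1) * fct (n+3) * fct (n+4) * fct (n+5) * fct (n+6) * fct (n+7)) + (fct n * fct (n+1) * fct (n+2) * fct (n+4) * fct (n+5) * fct (n+6) * fct (n+7)) + (fct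 n * fct (n+1) * fct (n+2) * fct (n+3) * fct (n+5) * fct (n+6) * fct (n+7)) + (fct n * fct (n+1) * fct (n+2) * fct (n+3) * fct (n+4) * fct (n+6) * fct (n+7)) + (fct n * fct (n+1) * fct (n+2) * fct (n+3) * fct (n+4) * fct (n+5) * fct (n+7)) + (fct n * fct (n+1) * fct (n+2) * fct (n+3) * fct (n+4) * fct (n+5) * fct (n+6))) * pp n := by
  simp only [show n+8 = n+7+1 from rfl, show n+7 = n+6+1 from rfl, show n+6 = n+5+1 from rfl,
    show n+5 = n+4+1 from rfl, show n+4 = n+3+1 from rfl, show n+3 = n+2+1 from rfl,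
    show n+2 = n+1+1 from rfl, step_g, step_p]
  ring

lemma ZA : fct 0 * fct 1 * fct 2 * fct 3 * fct 4 * fct 5 * fct 6 * fct 7 = 1 + 8 * ((-7)*X + (161)*X^2 + (-1960)*X^3 + (13538)*X^4 + (-52528)*X^5 + (104544)*X^6 + (-80640)*X^7) := by
  simp only [fct, Nat.cast_ofNat, Nat.cast_one, Nat.cast_zero, map_mul, map_ofNat, map_one,
    map_zero, mul_zero, zero_mul, mul_one, one_mul]
  ring

lemma ZB : (fct 1 * fct 2 * fct 3 * fct 4 * fct 5 * fct 6 * fct 7) + (fct 0 * fct 2 * fct 3 * fct 4 * fct 5 * fct 6 * fct 7) + (fct 0 * fct 1 * fct 3 * fct 4 * fct 5 * fct 6 * fct 7) + (fct 0 * fct 1 * fct 2 * fct 4 * fct 5 * fct 6 * fct 7) + (fct 0 * fct 1 * fct 2 * fct 3 * fct 5 * fct 6 * fct 7) + (fct 0 * fct 1 * fct 2 * fct 3 * fct 4 * fct 6 * fct 7) + (fct 0 * fct 1 * fct 2 * fct 3 * fct 4 * fct 5 * fct 7) + (fct 0 * fct 1 * fct 2 * fct 3 * fct 4 * fct 5 *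 fct 6) = 8 * ((1) + (-49)*X + (966)*X^2 + (-9800)*X^3 + (54152)*X^4 + (-157584)*X^5 + (209088)*X^6 + (-80640)*X^7) := by
  simp only [fct, Nat.cast_ofNat, Nat.cast_one, Nat.cast_zero, map_mul, map_ofNat, map_one,
    map_zero, mul_zero, zero_mul, mul_one, one_mul]
  ring

lemma fmap (s k : ℕ) : (fct (8*s+k)).map (Int.castRingHom (ZMod 8))
    = (fct k).map (Int.castRingHom (ZMod 8)) := by
  simp only [fct, Polynomial.map_sub, Polynomial.map_one, Polynomial.map_mul, Polynomial.map_C,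
    Polynomial.map_X]
  simp only [Int.coe_castRingHom]
  congr 2
  have h8 : (8 : ZMod 8) = 0 := by decide
  push_cast
  rw [h8]
  ring

lemma fmap0 (s : ℕ) : (fct (8*s)).map (Int.castRingHom (ZMod 8))
    = (fct 0).map (Int.castRingHom (ZMod 8)) := by
  simpa using fmap s 0

lemma h8Z : (8 : (ZMod 8)[X]) = 0 := by
  rw [← map_ofNat (C : ZMod 8 →+* (ZMod 8)[X]) 8, show (8 : ZMod 8) = 0 by decide, map_zero]

lemma key8 : ∀ s, (pp (8*s)).map (Int.castRingHom (ZMod 8)) = 1 ∧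
    (gg (8*s)).map (Int.castRingHom (ZMod 8)) = 0 := by
  intro s
  induction s with
  | zero => constructor <;> simp [pp, gg]
  | succ s ih =>
    have hA := congrArg (Polynomial.map (Int.castRingHom (ZMod 8))) ZA
    have hB := congrArg (Polynomial.map (Int.castRingHom (ZMod 8))) ZB
    simp only [Polynomial.map_add, Polynomial.map_mul, Polynomial.map_one, Polynomial.map_ofNat,
      Polynomial.map_pow, Polynomial.map_sub, Polynomial.map_neg, h8Z, zero_mul, add_zero] at hA hB
    rw [show 8*(s+1) = 8*s+8 by ring]
    rw [chain_p, chain_g]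
    simp only [Polynomial.map_add, Polynomial.map_mul, fmap, fmap0, ih.1, ih.2, mul_zero, mul_one,
      zero_add, add_zero]
    exact ⟨hA, hB⟩

lemma ggdvd (t : ℕ) : C (8:ℤ) ∣ gg (8*t) := by
  rw [Polynomial.C_dvd_iff_dvd_coeff]
  intro i
  have h := (key8 t).2
  have h2 : (((gg (8*t)).coeff i : ℤ) : ZMod 8) = 0 := by
    have := congrArg (fun p => Polynomial.coeff p i) h
    simpa [Polynomial.coeff_map] using this
  exact_mod_cast (ZMod.intCast_zmod_eq_zero_iff_dvd _ 8).mp h2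

lemma pp0 : pp 0 = 1 := Finset.prod_range_zero _

lemma pp8eq : pp (0+1+1+1+1+1+1+1+1) = 1 + 8*X + 8*X^2 + 16*X^4 + 32 * ((-2)*X + (40)*X^2 + (-490)*X^3 + (3384)*X^4 + (-13132)*X^5 + (26136)*X^6 + (-20160)*X^7) := by
  simp only [step_p, pp0]
  simp only [fct, Nat.cast_ofNat, Nat.cast_one, Nat.cast_zero, Nat.cast_add, map_mul, map_ofNat, map_one,
    map_zero, mul_zero, zero_mul, mul_one, one_mul]
  ring

lemma pp16eq : pp (0+1+1+1+1+1+1+1+1+1+1+1+1+1+1+1+1) = 1 + 16*X + 80*X^2 + 96*X^4 + 128 * ((-2)*X + (205)*X^2 + (-13650)*X^3 + (612452)*X^4 + (-19639620)*X^5 + (464047870)*X^6 + (-8207628000)*X^7 + (109262259106)*X^8 + (-1091212842720)*X^9 + (8077376856640)*X^10 + (-43309013529600)*X^11 + (161823862522368)*X^12 + (-394612327342080)*X^13 + (555412864204800)*X^14 + (-334764638208000)*X^15) := by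
  simp only [step_p, pp0]
  simp only [fct, Nat.cast_ofNat, Nat.cast_one, Nat.cast_zero, Nat.cast_add, map_mul, map_ofNat, map_one,
    map_zero, mul_zero, zero_mul, mul_one, one_mul]
  ring

lemma fshift (n j : ℕ) : fct (2^n + j) = fct j + -(2 * C ((2:ℤ)^n) * X) := by
  simp only [fct]
  have h : (2 * (((2^n + j : ℕ)) : ℤ)) = 2*(j:ℤ) + 2^(n+1) := by push_cast; ring
  rw [h, map_add]
  have h2 : C ((2:ℤ)^(n+1)) = 2 * C ((2:ℤ)^n) := by
    rw [pow_succ, mul_comm, map_mul, map_ofNat]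
  rw [h2]; ring

lemma inv (n : ℕ) (hn : 4 ≤ n) : ∃ E : ℤ[X],
    pp (2^n) = 1 + C ((2:ℤ)^n) * (X + 5*X^2 + 6*X^4) + 8 * C ((2:ℤ)^n) * E := by
  induction n, hn using Nat.le_induction with
  | base =>
    refine ⟨(-2)*X + (205)*X^2 + (-13650)*X^3 + (612452)*X^4 + (-19639620)*X^5 + (464047870)*X^6 + (-8207628000)*X^7 + (109262259106)*X^8 + (-1091212842720)*X^9 + (8077376856640)*X^10 + (-43309013529600)*X^11 + (161823862522368)*X^12 + (-394612327342080)*X^13 + (555412864204800)*X^14 + (-334764638208000)*X^15, ?_⟩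
    rw [show (2:ℕ)^4 = 0+1+1+1+1+1+1+1+1+1+1+1+1+1+1+1+1 from rfl, pp16eq]
    norm_num [map_ofNat]
    ring
  | succ n hn ih =>
    obtain ⟨E, hE⟩ := ih
    have hsplit : pp (2^(n+1)) = pp (2^n) * ∏ j ∈ range (2^n), (fct j + -(2 * C ((2:ℤ)^n) * X)) := by
      unfold pp
      rw [show (2:ℕ)^(n+1) = 2^n + 2^n by ring, Finset.prod_range_add]
      exact congrArg _ (Finset.prod_congr rfl fun j _ => fshift n j)
    obtain ⟨r, hr⟩ := qq (-(2 * C ((2:ℤ)^n) * X)) (2^n)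
    obtain ⟨v, hv⟩ : C (8:ℤ) ∣ gg (2^n) := by
      have h := pow_add 2 3 (n-3)
      rw [show 3+(n-3) = n by omega] at h
      rw [h, show (2:ℕ)^3 = 8 from rfl]
      exact ggdvd _
    have hA : C ((2:ℤ)^n) = 16 * C ((2:ℤ)^(n-4)) := by
      have h := pow_add (2:ℤ) (n-4) 4
      rw [show n-4+4 = n by omega] at h
      rw [h, map_mul, show ((2:ℤ)^4) = 16 by norm_num, map_ofNat, mul_comm]
    have hA' : C ((2:ℤ)^(n+1)) = 32 * C ((2:ℤ)^(n-4)) := by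
      have h := pow_add (2:ℤ) (n-4) 5
      rw [show n-4+5 = n+1 by omega] at h
      rw [h, map_mul, show ((2:ℤ)^5) = 32 by norm_num, map_ofNat, mul_comm]
    refine ⟨C ((2:ℤ)^(n-4)) * (X + 5*X^2 + 6*X^4)^2 + E
      + 16*C ((2:ℤ)^(n-4))*(X + 5*X^2 + 6*X^4)*E + 64*C ((2:ℤ)^(n-4))*E^2
      - X*v*(1 + 16*C ((2:ℤ)^(n-4))*(X + 5*X^2 + 6*X^4) + 128*C ((2:ℤ)^(n-4))*E)
      + 4*C ((2:ℤ)^(n-4))*X^2*r*(1 + 16*C ((2:ℤ)^(n-4))*(X + 5*X^2 + 6*X^4) + 128*C ((2:ℤ)^(n-4))*E), ?_⟩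
    rw [hsplit, hr, hv, hE, hA, hA']
    simp only [map_ofNat]
    ring

lemma IccppZ : ∀ K : ℕ, ∏ i ∈ Finset.Icc (1:ℤ) (K:ℤ), (1 - C (2 * i) * X) = pp (K+1) := by
  intro K
  induction K with
  | zero =>
    rw [show ((0:ℕ):ℤ) = 0 from rfl, Finset.Icc_eq_empty (by norm_num), Finset.prod_empty,
      show (0+1 : ℕ) = 0+1 from rfl, step_p, pp0]
    simp [fct]
  | succ K ih =>
    have hins : Finset.Icc (1:ℤ) ((K+1:ℕ):ℤ) = insert ((K:ℤ)+1) (Finset.Icc 1 (K:ℤ)) := by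
      ext x
      simp only [Finset.mem_Icc, Finset.mem_insert]
      push_cast
      omega
    rw [hins, Finset.prod_insert (by simp), ih, step_p (K+1)]
    have h : fct (K+1) = 1 - C (2 * ((K:ℤ)+1)) * X := by
      simp only [fct]; push_cast; ring_nf
    rw [h]; ring

open Polynomial in
theorem prod_even_linear_congr (m : ℕ) (hm : 4 ≤ m) :
    ∀ k : ℕ, (2 ^ (m + 1) : ℤ) ∣
      ((∏ i ∈ Finset.Icc 1 (2 ^ (m - 1) - 1), (1 - C (2 * (i : ℤ)) * X)) -
        (1 + C ((2 : ℤ) ^ (m - 1)) * X + C ((2 : ℤ) ^ (m - 1)) * X ^ 2 +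
          C ((2 : ℤ) ^ m) * X ^ 4)).coeff k := by
  intro k
  rcases eq_or_lt_of_le hm with h4 | h5
  · -- m = 4
    subst h4
    rw [show ((2:ℤ) ^ (4-1) - 1) = ((7:ℕ):ℤ) by norm_num, IccppZ 7]
    have hd : pp (7+1) - (1 + C ((2:ℤ)^(4-1))*X + C ((2:ℤ)^(4-1))*X^2 + C ((2:ℤ)^4)*X^4)
        = C (32:ℤ) * ((-2)*X + 40*X^2 + (-490)*X^3 + 3384*X^4 + (-13132)*X^5 + 26136*X^6
            + (-20160)*X^7) := by
      rw [show (7+1 : ℕ) = 0+1+1+1+1+1+1+1+1 from rfl, pp8eq]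
      norm_num [map_ofNat]
    rw [hd, Polynomial.coeff_C_mul]
    norm_num
  · -- m ≥ 5
    obtain ⟨n, rfl⟩ : ∃ n, m = n+1 := ⟨m-1, by omega⟩
    have hn : 4 ≤ n := by omega
    simp only [Nat.add_sub_cancel]
    obtain ⟨E, hE⟩ := inv n hn
    have h1 : (1:ℕ) ≤ 2^n := Nat.one_le_two_pow
    have hb : ((2^n - 1 : ℕ) : ℤ) = 2^n - 1 := by push_cast [h1]; ring
    rw [← hb, IccppZ (2^n - 1),
      show (2:ℕ)^n - 1 + 1 = 2^n from Nat.succ_pred_eq_of_pos (pow_pos (by norm_num) n)]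
    have hC1 : C ((2:ℤ)^(n+1)) = 2 * C ((2:ℤ)^n) := by
      rw [pow_succ, mul_comm, map_mul, map_ofNat]
    have hC2 : C ((2:ℤ)^(n+2)) = 4 * C ((2:ℤ)^n) := by
      rw [show n+2 = n+1+1 from rfl, pow_succ, pow_succ, mul_assoc, mul_comm, map_mul]
      norm_num [map_ofNat]
    have hd : pp (2^n) - (1 + C ((2:ℤ)^n)*X + C ((2:ℤ)^n)*X^2 + C ((2:ℤ)^(n+1))*X^4)
        = C ((2:ℤ)^(n+2)) * (X^2 + X^4 + 2*E) := by
      rw [hE, hC1, hC2]; ring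
    rw [hd, Polynomial.coeff_C_mul]
    exact Dvd.intro _ rfl
end

section
/- Let a, b, n be natural numbers with a > b ≥ 1 and n ≥ 2. If b·2^n > n + 2 + ν₂(a−b), then ν₂(S(a·2^n, 3) − S(b·2^n, 3)) = n + 1 + ν₂(a−b); if b·2^n = n + 2 + ν₂(a−b), then ν₂(S(a·2^n, 3) − S(b·2^n, 3)) > n + 1 + ν₂(a−b); and if b·2^n < n + 2 + ν₂(a−b), then ν₂(S(a·2^n, 3) − S(b·2^n, 3)) = b·2^n − 1. -/
set_option linter.unnecessarySimpa false

lemma st1 (m : ℕ) : stirling (m + 1) 1 = 1 := by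
  induction m with
  | zero => rfl
  | succ k ih =>
    show stirling (k + 1) 0 + 1 * stirling (k + 1) 1 = 1
    rw [ih, show stirling (k + 1) 0 = 0 from rfl]

lemma st2 (m : ℕ) : 2 * stirling (m + 1) 2 + 2 = 2 ^ (m + 1) := by
  induction m with
  | zero => decide
  | succ k ih =>
    have h : stirling (k + 2) 2 = stirling (k + 1) 1 + 2 * stirling (k + 1) 2 := rfl
    rw [h, st1, pow_succ]
    omega

lemma st3 (m : ℕ) : 6 * stirling (m + 1) 3 + 3 * 2 ^ (m + 1) = 3 ^ (m + 1) + 3 := by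
  induction m with
  | zero => decide
  | succ k ih =>
    have h : stirling (k + 2) 3 = stirling (k + 1) 2 + 3 * stirling (k + 1) 3 := rfl
    have h2 := st2 k
    rw [h, pow_succ 2 (k+1), pow_succ 3 (k+1)]
    omega

lemma st3_pos (m : ℕ) : 1 ≤ stirling (m + 3) 3 := by
  induction m with
  | zero => decide
  | succ k ih =>
    show 1 ≤ stirling (k + 4) 3
    have h : stirling (k + 4) 3 = stirling (k + 3) 2 + 3 * stirling (k + 3) 3 := rfl
    omega

lemma st3_step (x : ℕ) (hx : 3 ≤ x) : stirling x 3 < stirling (x + 1) 3 := by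
  obtain ⟨m, rfl⟩ : ∃ m, x = m + 3 := ⟨x - 3, by omega⟩
  show stirling (m + 3) 3 < stirling (m + 4) 3
  have h : stirling (m + 4) 3 = stirling (m + 3) 2 + 3 * stirling (m + 3) 3 := rfl
  have := st3_pos m
  omega

lemma st3_mono {x y : ℕ} (hx : 3 ≤ x) (hxy : x < y) : stirling x 3 < stirling y 3 := by
  induction y with
  | zero => omega
  | succ k ih =>
    rcases Nat.lt_succ_iff_lt_or_eq.mp hxy with h | h
    · exact lt_trans (ih h) (st3_step k (by omega))
    · subst h; exact st3_step x hx

lemma odd_part (N : ℕ) (hN : N ≠ 0) : ∃ u, Odd u ∧ N = 2 ^ padicValNat 2 N * u := by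
  refine ⟨N / 2 ^ (N.factorization 2), ?_, ?_⟩
  · have h := Nat.not_dvd_ordCompl Nat.prime_two hN
    exact Nat.odd_iff.mpr (Nat.two_dvd_ne_zero.mp h)
  · rw [← Nat.factorization_def N Nat.prime_two]
    exact (Nat.ordProj_mul_ordCompl_eq_self N 2).symm

lemma padicValInt_two_pow_mul_odd (t : ℕ) (u : ℤ) (hu : Odd u) :
    padicValInt 2 (2 ^ t * u) = t := by
  have hu0 : u ≠ 0 := by rintro rfl; simp at hu
  rw [padicValInt.mul (by positivity) hu0]
  have h1 : padicValInt 2 ((2 : ℤ) ^ t) = t := by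
    unfold padicValInt
    rw [Int.natAbs_pow]
    exact padicValNat.prime_pow t
  have h2 : padicValInt 2 u = 0 := by
    unfold padicValInt
    apply padicValNat.eq_zero_of_not_dvd
    rw [Nat.two_dvd_ne_zero, ← Nat.odd_iff]
    exact Int.natAbs_odd.mpr hu
  omega

lemma padicValInt_six_mul (D : ℤ) (hD : D ≠ 0) :
    padicValInt 2 (6 * D) = 1 + padicValInt 2 D := by
  rw [padicValInt.mul (by norm_num) hD]
  congr 1
  have : (6 : ℤ) = 2 ^ 1 * 3 := by norm_num
  rw [this, padicValInt_two_pow_mul_odd 1 3 (by decide)]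

lemma val_of_rep (D : ℤ) (hD : D ≠ 0) (t : ℕ) (u : ℤ) (hu : Odd u)
    (h : 6 * D = 2 ^ t * u) : padicValInt 2 D + 1 = t := by
  have := padicValInt_six_mul D hD
  rw [h, padicValInt_two_pow_mul_odd t u hu] at this
  omega

theorem val_diff_stirling_three (a b n : ℕ) (hb : 1 ≤ b) (hab : b < a) (hn : 2 ≤ n) :
    (b * 2 ^ n > n + 2 + padicValNat 2 (a - b) →
      padicValInt 2 ((stirling (a * 2 ^ n) 3 : ℤ) - stirling (b * 2 ^ n) 3) =
        n + 1 + padicValNat 2 (a - b)) ∧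
    (b * 2 ^ n = n + 2 + padicValNat 2 (a - b) →
      padicValInt 2 ((stirling (a * 2 ^ n) 3 : ℤ) - stirling (b * 2 ^ n) 3) >
        n + 1 + padicValNat 2 (a - b)) ∧
    (b * 2 ^ n < n + 2 + padicValNat 2 (a - b) →
      padicValInt 2 ((stirling (a * 2 ^ n) 3 : ℤ) - stirling (b * 2 ^ n) 3) =
        b * 2 ^ n - 1) := by
  set A := a * 2 ^ n with hA
  set B := b * 2 ^ n with hB
  set v := padicValNat 2 (a - b) with hv
  set D : ℤ := (stirling A 3 : ℤ) - stirling B 3 with hDdef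
  have h2n : (4 : ℕ) ≤ 2 ^ n := by
    calc (4:ℕ) = 2 ^ 2 := by norm_num
    _ ≤ 2 ^ n := Nat.pow_le_pow_right (by norm_num) hn
  have hBA : B < A := by
    have := (Nat.mul_lt_mul_right (show 0 < 2 ^ n by omega)).mpr hab
    simpa [hA, hB] using this
  have hB4 : 4 ≤ B := by
    calc 4 = 1 * 4 := by norm_num
    _ ≤ b * 2 ^ n := Nat.mul_le_mul hb h2n
  -- valuation of A - B
  have hABsub : A - B = (a - b) * 2 ^ n := by rw [hA, hB, Nat.sub_mul]
  have hvAB : padicValNat 2 (A - B) = v + n := by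
    rw [hABsub, padicValNat.mul (by omega) (by positivity), padicValNat.prime_pow]
  have hABpos : 0 < A - B := by omega
  have hABeven : Even (A - B) := by
    rw [hABsub]
    exact (Nat.even_pow.mpr ⟨even_two, by omega⟩).mul_left _
  -- valuation of 3^A - 3^B
  have hpowlt : (3:ℕ) ^ B < 3 ^ A := Nat.pow_lt_pow_right (by norm_num) hBA
  have hP1 : (3:ℕ) ^ A - 3 ^ B = 3 ^ B * (3 ^ (A - B) - 1) := by
    rw [Nat.mul_sub, mul_one, ← pow_add]
    congr 2
    omega
  have hLTE : padicValNat 2 ((3:ℕ) ^ (A - B) - 1) = 2 + (v + n) := by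
    have h := padicValNat.pow_two_sub_pow (x := 3) (y := 1) (by norm_num) (by norm_num)
      (by norm_num) (n := A - B) (by omega) hABeven
    rw [one_pow] at h
    have h4 : padicValNat 2 4 = 2 := by
      rw [show (4:ℕ) = 2 ^ 2 by norm_num, padicValNat.prime_pow]
    have h2 : padicValNat 2 2 = 1 := by
      simpa using padicValNat.prime_pow (p := 2) 1
    rw [h4, h2, hvAB] at h
    omega
  have hvP : padicValNat 2 ((3:ℕ) ^ A - 3 ^ B) = n + 2 + v := by
    have h3B : ¬ (2:ℕ) ∣ 3 ^ B := by
      intro h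
      have := Nat.Prime.dvd_of_dvd_pow Nat.prime_two h
      omega
    have hsub : (3:ℕ) ^ (A - B) - 1 ≠ 0 := by
      have : (1:ℕ) < 3 ^ (A - B) := Nat.one_lt_pow (by omega) (by norm_num)
      omega
    rw [hP1, padicValNat.mul (by positivity) hsub,
      padicValNat.eq_zero_of_not_dvd h3B, hLTE]
    omega
  -- odd part of 3^A - 3^B
  obtain ⟨p', hp'odd, hp'⟩ := odd_part ((3:ℕ) ^ A - 3 ^ B) (by omega)
  rw [hvP] at hp'
  -- odd part of 3 * (2^A - 2^B)
  have hQ1 : 3 * ((2:ℕ) ^ A - 2 ^ B) = 2 ^ B * (3 * (2 ^ (A - B) - 1)) := by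
    have e : (2:ℕ) ^ B * 2 ^ (A - B) = 2 ^ A := by
      rw [← pow_add]; congr 1; omega
    have s0 : 3 * ((2:ℕ) ^ A - 2 ^ B) = 3 * 2 ^ A - 3 * 2 ^ B := Nat.mul_sub ..
    have s1 : 3 * ((2:ℕ) ^ (A - B) - 1) = 3 * 2 ^ (A - B) - 3 := by
      rw [Nat.mul_sub, mul_one]
    have s2 : (2:ℕ) ^ B * (3 * 2 ^ (A - B) - 3) = 3 * 2 ^ A - 3 * 2 ^ B := by
      rw [Nat.mul_sub,
        show (2:ℕ) ^ B * (3 * 2 ^ (A - B)) = 3 * 2 ^ A by rw [← e]; ring,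
        mul_comm ((2:ℕ) ^ B) 3]
    rw [s0, s1, s2]
  have hq'odd : Odd (3 * ((2:ℕ) ^ (A - B) - 1)) := by
    refine Odd.mul (by decide) ?_
    have h1 : Even ((2:ℕ) ^ (A - B)) := Nat.even_pow.mpr ⟨even_two, by omega⟩
    have h2 : (1:ℕ) ≤ 2 ^ (A - B) := Nat.one_le_two_pow
    exact Nat.Even.sub_odd h2 h1 odd_one
  set q' := 3 * ((2:ℕ) ^ (A - B) - 1) with hq'
  -- the key identity
  have hpow2lt : (2:ℕ) ^ B < 2 ^ A := Nat.pow_lt_pow_right (by norm_num) hBA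
  have key : 6 * D = 2 ^ (n + 2 + v) * (p' : ℤ) - 2 ^ B * (q' : ℤ) := by
    have e1 := st3 (A - 1)
    have e2 := st3 (B - 1)
    rw [show A - 1 + 1 = A by omega] at e1
    rw [show B - 1 + 1 = B by omega] at e2
    have e1' : 6 * (stirling A 3 : ℤ) + 3 * 2 ^ A = 3 ^ A + 3 := by exact_mod_cast e1
    have e2' : 6 * (stirling B 3 : ℤ) + 3 * 2 ^ B = 3 ^ B + 3 := by exact_mod_cast e2
    have hc1 : ((3:ℕ) ^ A - 3 ^ B : ℕ) = ((3:ℤ) ^ A - 3 ^ B) := by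
      push_cast [Nat.cast_sub hpowlt.le]; ring
    have hc2 : ((3 * ((2:ℕ) ^ A - 2 ^ B) : ℕ) : ℤ) = 3 * ((2:ℤ) ^ A - 2 ^ B) := by
      push_cast [Nat.cast_sub hpow2lt.le]; ring
    have : 6 * D = ((3:ℤ) ^ A - 3 ^ B) - 3 * ((2:ℤ) ^ A - 2 ^ B) := by
      rw [hDdef]; linarith [e1', e2']
    rw [this, ← hc1, ← hc2, hp', hQ1]
    push_cast
    ring
  have hDpos : 0 < D := by
    have := st3_mono (x := B) (y := A) (by omega) hBA
    rw [hDdef]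
    exact sub_pos.mpr (by exact_mod_cast this)
  have hDne : D ≠ 0 := hDpos.ne'
  refine ⟨?_, ?_, ?_⟩
  · -- B > n + 2 + v
    intro hgt
    have hle : n + 2 + v + 1 ≤ B := hgt
    have hrep : 6 * D = 2 ^ (n + 2 + v) * ((p' : ℤ) - 2 ^ (B - (n + 2 + v)) * q') := by
      rw [key, mul_sub, ← mul_assoc, ← pow_add, show n + 2 + v + (B - (n + 2 + v)) = B by omega]
    have hodd : Odd ((p' : ℤ) - 2 ^ (B - (n + 2 + v)) * q') := by
      refine Odd.sub_even ?_ ?_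
      · exact_mod_cast hp'odd
      · refine Even.mul_right ?_ _
        exact (Int.even_pow.mpr ⟨even_two, by omega⟩)
    have := val_of_rep D hDne _ _ hodd hrep
    omega
  · -- B = n + 2 + v
    intro heq
    have hoddq : Odd ((q' : ℤ)) := by exact_mod_cast hq'odd
    have hoddp : Odd ((p' : ℤ)) := by exact_mod_cast hp'odd
    obtain ⟨w, hw⟩ : Even ((p' : ℤ) - q') := hoddp.sub_odd hoddq
    have hrep : 6 * D = 2 ^ (n + 2 + v + 1) * w := by
      rw [key, ← heq, ← mul_sub, hw, pow_succ]
      ring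
    have hdvd : (2:ℤ) ^ (n + 2 + v + 1) ∣ 6 * D := ⟨w, hrep⟩
    have h6D : (6:ℤ) * D ≠ 0 := mul_ne_zero (by norm_num) hDne
    have hle := (padicValInt_dvd_iff (p := 2) (n + 2 + v + 1) (6 * D)).mp hdvd
    have hval := padicValInt_six_mul D hDne
    rcases hle with h | h
    · exact absurd h (mul_ne_zero (by norm_num) hDne)
    · omega
  · -- B < n + 2 + v
    intro hlt
    have hrep : 6 * D = 2 ^ B * (2 ^ (n + 2 + v - B) * (p' : ℤ) - q') := by
      rw [key, mul_sub, ← mul_assoc, ← pow_add, show B + (n + 2 + v - B) = n + 2 + v by omega]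
    have hodd : Odd ((2:ℤ) ^ (n + 2 + v - B) * (p' : ℤ) - q') := by
      refine Even.sub_odd ?_ ?_
      · refine Even.mul_right ?_ _
        exact (Int.even_pow.mpr ⟨even_two, by omega⟩)
      · exact_mod_cast hq'odd
    have := val_of_rep D hDne _ _ hodd hrep
    omega
end

section
/- Let a, b, n be natural numbers with a > b ≥ 1 and n ≥ 3. If b·2^n > n + 3 + ν₂(a−b), then ν₂(S(a·2^n, 7) − S(b·2^n, 7)) = n + 1 + ν₂(a−b); if b·2^n = n + 3 + ν₂(a−b), then ν₂(S(a·2^n, 7) − S(b·2^n, 7)) > n + 1 + ν₂(a−b); and if b·2^n < n + 3 + ν₂(a−b), then ν₂(S(a·2^n, 7) − S(b·2^n, 7)) = b·2^n − 2. -/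
section StirlingHelpers

private lemma stirling_formula : ∀ m : ℕ, 1 ≤ m →
    ((stirling m 1 : ℤ) = 1 ∧
    (2 * stirling m 2 : ℤ) = 2^m - 2 ∧
    (6 * stirling m 3 : ℤ) = 3^m - 3*2^m + 3 ∧
    (24 * stirling m 4 : ℤ) = 4^m - 4*3^m + 6*2^m - 4 ∧
    (120 * stirling m 5 : ℤ) = 5^m - 5*4^m + 10*3^m - 10*2^m + 5 ∧
    (720 * stirling m 6 : ℤ) = 6^m - 6*5^m + 15*4^m - 20*3^m + 15*2^m - 6 ∧
    (5040 * stirling m 7 : ℤ) = 7^m - 7*6^m + 21*5^m - 35*4^m + 35*3^m - 21*2^m + 7) := by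
  intro m hm
  induction m with
  | zero => omega
  | succ m ih =>
    rcases Nat.eq_zero_or_pos m with rfl | hm'
    · have v1 : stirling 1 1 = 1 := rfl
      have v2 : stirling 1 2 = 0 := rfl
      have v3 : stirling 1 3 = 0 := rfl
      have v4 : stirling 1 4 = 0 := rfl
      have v5 : stirling 1 5 = 0 := rfl
      have v6 : stirling 1 6 = 0 := rfl
      have v7 : stirling 1 7 = 0 := rfl
      rw [v1, v2, v3, v4, v5, v6, v7]; norm_num
    obtain ⟨h1, h2, h3, h4, h5, h6, h7⟩ := ih hm'
    have e1 : stirling (m+1) 1 = stirling m 0 + 1 * stirling m 1 := rfl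
    have e2 : stirling (m+1) 2 = stirling m 1 + 2 * stirling m 2 := rfl
    have e3 : stirling (m+1) 3 = stirling m 2 + 3 * stirling m 3 := rfl
    have e4 : stirling (m+1) 4 = stirling m 3 + 4 * stirling m 4 := rfl
    have e5 : stirling (m+1) 5 = stirling m 4 + 5 * stirling m 5 := rfl
    have e6 : stirling (m+1) 6 = stirling m 5 + 6 * stirling m 6 := rfl
    have e7 : stirling (m+1) 7 = stirling m 6 + 7 * stirling m 7 := rfl
    have h0 : stirling m 0 = 0 := by cases m with | zero => omega | succ k => rfl
    refine ⟨?_, ?_, ?_, ?_, ?_, ?_, ?_⟩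
    · rw [e1, h0]; push_cast; linarith
    · rw [e2]; push_cast; linear_combination 2*h1 + 2*h2
    · rw [e3]; push_cast; linear_combination 3*h2 + 3*h3
    · rw [e4]; push_cast; linear_combination 4*h3 + 4*h4
    · rw [e5]; push_cast; linear_combination 5*h4 + 5*h5
    · rw [e6]; push_cast; linear_combination 6*h5 + 6*h6
    · rw [e7]; push_cast; linear_combination 7*h6 + 7*h7

private lemma stirling_seven_pos : ∀ m : ℕ, 1 ≤ stirling (m+7) 7 := by
  intro m
  induction m with
  | zero => decide
  | succ m ih =>
    show 1 ≤ stirling (m+8) 7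
    have e : stirling (m+8) 7 = stirling (m+7) 6 + 7 * stirling (m+7) 7 := rfl
    omega

private lemma stirling_seven_lt {m : ℕ} (hm : 7 ≤ m) :
    ∀ d : ℕ, stirling m 7 < stirling (m+(d+1)) 7 := by
  have step : ∀ j, 7 ≤ j → stirling j 7 < stirling (j+1) 7 := by
    intro j hj
    have e : stirling (j+1) 7 = stirling j 6 + 7 * stirling j 7 := rfl
    have pos : 1 ≤ stirling j 7 := by
      have := stirling_seven_pos (j-7)
      have hj' : j - 7 + 7 = j := by omega
      rwa [hj'] at this
    omega
  intro d
  induction d with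
  | zero => exact step m hm
  | succ d ih =>
    calc stirling m 7 < stirling (m+(d+1)) 7 := ih
    _ < stirling (m+(d+1)+1) 7 := step _ (by omega)
    _ = stirling (m+(d+1+1)) 7 := by ring_nf

private lemma pow3_form : ∀ k : ℕ, ∃ t : ℕ, 3^(2^(k+3)) = 1 + 2^(k+5)*(13+16*t) := by
  intro k
  induction k with
  | zero => exact ⟨12, by norm_num⟩
  | succ k ih =>
    obtain ⟨t, ht⟩ := ih
    refine ⟨t + 2^k*(13+16*t)^2, ?_⟩
    have h : (2:ℕ)^(k+1+3) = 2^(k+3)*2 := by ring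
    rw [h, pow_mul, ht]; ring

private lemma pow5_form : ∀ k : ℕ, ∃ t : ℕ, 5^(2^(k+3)) = 1 + 2^(k+5)*(15+16*t) := by
  intro k
  induction k with
  | zero => exact ⟨762, by norm_num⟩
  | succ k ih =>
    obtain ⟨t, ht⟩ := ih
    refine ⟨t + 2^k*(15+16*t)^2, ?_⟩
    have h : (2:ℕ)^(k+1+3) = 2^(k+3)*2 := by ring
    rw [h, pow_mul, ht]; ring

private lemma pow7_form : ∀ k : ℕ, ∃ t : ℕ, 7^(2^(k+3)) = 1 + 2^(k+6)*(3+8*t) := by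
  intro k
  induction k with
  | zero => exact ⟨11259, by norm_num⟩
  | succ k ih =>
    obtain ⟨t, ht⟩ := ih
    refine ⟨t + 2^(k+2)*(3+8*t)^2, ?_⟩
    have h : (2:ℕ)^(k+1+3) = 2^(k+3)*2 := by ring
    rw [h, pow_mul, ht]; ring

private lemma pow_c16 (k x : ℕ) :
    ∀ c : ℕ, ∃ s : ℕ, (1 + 2^(k+4)*x)^c = 1 + 2^(k+4)*(c*x + 16*s) := by
  intro c
  induction c with
  | zero => exact ⟨0, by norm_num⟩
  | succ c ih =>
    obtain ⟨s, hs⟩ := ih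
    refine ⟨s + 2^k*x*(c*x+16*s), ?_⟩
    rw [pow_succ, hs]; ring

private lemma pow_c8 (k x : ℕ) :
    ∀ c : ℕ, ∃ s : ℕ, (1 + 2^(k+3)*x)^c = 1 + 2^(k+3)*(c*x + 8*s) := by
  intro c
  induction c with
  | zero => exact ⟨0, by norm_num⟩
  | succ c ih =>
    obtain ⟨s, hs⟩ := ih
    refine ⟨s + 2^k*x*(c*x+8*s), ?_⟩
    rw [pow_succ, hs]; ring

private lemma pow_16 (w : ℕ) : ∀ m : ℕ, ∃ s : ℕ, (1+16*w)^m = 1 + 16*s := by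
  intro m
  induction m with
  | zero => exact ⟨0, by norm_num⟩
  | succ m ih =>
    obtain ⟨s, hs⟩ := ih
    exact ⟨s + w + 16*s*w, by rw [pow_succ, hs]; ring⟩

private lemma O_form (k c m : ℕ) (hc : Odd c) :
    ∃ w : ℤ, Odd w ∧
      (7:ℤ)^(8*m)*(7^(2^(k+3)*c)-1) + 21*5^(8*m)*(5^(2^(k+3)*c)-1)
        + 35*3^(8*m)*(3^(2^(k+3)*c)-1) = 2^(k+8) * w := by
  obtain ⟨t3, ht3⟩ := pow3_form k
  obtain ⟨t5, ht5⟩ := pow5_form k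
  obtain ⟨t7, ht7⟩ := pow7_form k
  obtain ⟨s3, hs3⟩ := pow_c16 (k+1) (13+16*t3) c
  obtain ⟨s5, hs5⟩ := pow_c16 (k+1) (15+16*t5) c
  obtain ⟨s7, hs7⟩ := pow_c8 (k+3) (3+8*t7) c
  obtain ⟨r3, hr3⟩ := pow_16 410 m
  obtain ⟨r5, hr5⟩ := pow_16 24414 m
  obtain ⟨r7, hr7⟩ := pow_16 360300 m
  have E3 : (3:ℕ)^(2^(k+3)*c) = 1 + 2^(k+5)*(c*(13+16*t3)+16*s3) := by
    rw [pow_mul, ht3]; exact hs3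
  have E5 : (5:ℕ)^(2^(k+3)*c) = 1 + 2^(k+5)*(c*(15+16*t5)+16*s5) := by
    rw [pow_mul, ht5]; exact hs5
  have E7 : (7:ℕ)^(2^(k+3)*c) = 1 + 2^(k+6)*(c*(3+8*t7)+8*s7) := by
    rw [pow_mul, ht7]; exact hs7
  have B3 : (3:ℕ)^(8*m) = 1 + 16*r3 := by
    rw [pow_mul]; norm_num at hr3 ⊢; exact hr3
  have B5 : (5:ℕ)^(8*m) = 1 + 16*r5 := by
    rw [pow_mul]; norm_num at hr5 ⊢; exact hr5
  have B7 : (7:ℕ)^(8*m) = 1 + 16*r7 := by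
    rw [pow_mul]; norm_num at hr7 ⊢; exact hr7
  have e3 : ((3:ℤ))^(2^(k+3)*c) = 1 + 2^(k+5)*(c*(13+16*t3)+16*s3) := by
    exact_mod_cast congrArg (Nat.cast (R := ℤ)) E3
  have e5 : ((5:ℤ))^(2^(k+3)*c) = 1 + 2^(k+5)*(c*(15+16*t5)+16*s5) := by
    exact_mod_cast congrArg (Nat.cast (R := ℤ)) E5
  have e7 : ((7:ℤ))^(2^(k+3)*c) = 1 + 2^(k+6)*(c*(3+8*t7)+8*s7) := by
    exact_mod_cast congrArg (Nat.cast (R := ℤ)) E7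
  have b3 : ((3:ℤ))^(8*m) = 1 + 16*r3 := by
    exact_mod_cast congrArg (Nat.cast (R := ℤ)) B3
  have b5 : ((5:ℤ))^(8*m) = 1 + 16*r5 := by
    exact_mod_cast congrArg (Nat.cast (R := ℤ)) B5
  have b7 : ((7:ℤ))^(8*m) = 1 + 16*r7 := by
    exact_mod_cast congrArg (Nat.cast (R := ℤ)) B7
  set Z : ℤ := (c*t7 + s7 + 2*r7*(c*(3+8*t7)+8*s7))
      + (21*c*t5 + 21*s5 + 21*r5*(c*(15+16*t5)+16*s5))
      + (35*c*t3 + 35*s3 + 35*r3*(c*(13+16*t3)+16*s3)) with hZ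
  refine ⟨97*c + 2*Z, ?_, ?_⟩
  · obtain ⟨j, hj⟩ := hc
    exact ⟨97*j + Z + 48, by push_cast [hj]; ring⟩
  · rw [e3, e5, e7, b3, b5, b7, hZ]; ring

private lemma E_form (B Δ : ℕ) (r : ℤ) (q d : ℕ) (h3B : (3:ℤ)^B = 1+16*r)
    (h2B : (2:ℤ)^B = 8*2^q) (hΔ2 : (2:ℤ)^Δ = 16*2^d) :
    ∃ w : ℤ, Odd w ∧
      7*6^B*((6:ℤ)^Δ-1) + 35*4^B*(4^Δ-1) + 21*2^B*(2^Δ-1) = 2^(B+2)*w := by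
  have h6B : (6:ℤ)^B = 2^B*3^B := by rw [← mul_pow]; norm_num
  have h6Δ : (6:ℤ)^Δ = 2^Δ*3^Δ := by rw [← mul_pow]; norm_num
  have h4B : (4:ℤ)^B = 2^B*2^B := by rw [← mul_pow]; norm_num
  have h4Δ : (4:ℤ)^Δ = 2^Δ*2^Δ := by rw [← mul_pow]; norm_num
  refine ⟨(-7 - 28*r + 4*2^d*(7*3^Δ*(1+16*r)+21)) + 70*2^q*(256*(2^d)^2-1), ?_, ?_⟩
  · exact ⟨-4 - 14*r + 2*2^d*(7*3^Δ*(1+16*r)+21) + 35*2^q*(256*(2^d)^2-1), by ring⟩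
  · rw [h6B, h6Δ, h4B, h4Δ, h3B, h2B, hΔ2, pow_succ, pow_succ, h2B]; ring

private lemma val_2 (x : ℤ) (K : ℕ) (w : ℤ) (hw : Odd w) (hx : x = 2^K * w) :
    padicValInt 2 x = K := by
  have hw0 : w ≠ 0 := by rintro rfl; simp at hw
  have hwa : Odd w.natAbs := Int.natAbs_odd.mpr hw
  have h : x.natAbs = 2^K * w.natAbs := by
    rw [hx, Int.natAbs_mul, Int.natAbs_pow]; rfl
  rw [padicValInt, h, padicValNat.mul (by positivity)
      (by simpa [Int.natAbs_eq_zero] using hw0),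
    padicValNat.prime_pow, padicValNat.eq_zero_of_not_dvd (by
      rw [Nat.two_dvd_ne_zero, ← Nat.odd_iff]; exact hwa), add_zero]

private lemma val_315 (S : ℤ) (K : ℕ) (w : ℤ) (hw : Odd w) (h : 315*S = 2^K*w) :
    padicValInt 2 S = K := by
  have hw0 : w ≠ 0 := by rintro rfl; simp at hw
  have hS0 : S ≠ 0 := by
    rintro rfl
    rw [mul_zero] at h
    exact hw0 (by simpa using h.symm)
  have h1 : padicValInt 2 ((315:ℤ)*S) = K := val_2 _ K w hw h
  rw [padicValInt.mul (by norm_num) hS0] at h1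
  have h315 : padicValInt 2 (315:ℤ) = 0 := by
    rw [padicValInt]
    exact padicValNat.eq_zero_of_not_dvd (by norm_num)
  omega

end StirlingHelpers

theorem val_diff_stirling_seven (a b n : ℕ) (hb : 1 ≤ b) (hab : b < a) (hn : 3 ≤ n) :
    (b * 2 ^ n > n + 3 + padicValNat 2 (a - b) →
      padicValInt 2 ((stirling (a * 2 ^ n) 7 : ℤ) - stirling (b * 2 ^ n) 7) =
        n + 1 + padicValNat 2 (a - b)) ∧
    (b * 2 ^ n = n + 3 + padicValNat 2 (a - b) →
      padicValInt 2 ((stirling (a * 2 ^ n) 7 : ℤ) - stirling (b * 2 ^ n) 7) >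
        n + 1 + padicValNat 2 (a - b)) ∧
    (b * 2 ^ n < n + 3 + padicValNat 2 (a - b) →
      padicValInt 2 ((stirling (a * 2 ^ n) 7 : ℤ) - stirling (b * 2 ^ n) 7) =
        b * 2 ^ n - 2) := by
  obtain ⟨n', rfl⟩ : ∃ n', n = n'+3 := ⟨n-3, by omega⟩
  set ν := padicValNat 2 (a - b) with hν
  have hab0 : a - b ≠ 0 := by omega
  set c := (a-b) / 2^ν with hcdef
  have hord : 2^ν * c = a - b := Nat.ordProj_mul_ordCompl_eq_self (a-b) 2
  have hc : Odd c := by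
    rw [Nat.odd_iff, ← Nat.two_dvd_ne_zero]
    exact Nat.not_dvd_ordCompl Nat.prime_two hab0
  set k := n' + ν with hk
  set B := b * 2^(n'+3) with hB
  set A := a * 2^(n'+3) with hA
  set Δ := (a-b) * 2^(n'+3) with hΔdef
  have hpow8 : (2:ℕ)^(n'+3) = 8 * 2^n' := by ring
  have hB8 : 8 ≤ B := by
    rw [hB, hpow8]
    calc (8:ℕ) = 1 * (8 * 1) := by norm_num
    _ ≤ b * (8 * 2^n') := by
        exact Nat.mul_le_mul hb (Nat.mul_le_mul_left 8 (Nat.one_le_two_pow))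
  have hΔ8 : 8 ≤ Δ := by
    rw [hΔdef, hpow8]
    calc (8:ℕ) = 1 * (8 * 1) := by norm_num
    _ ≤ (a-b) * (8 * 2^n') := by
        exact Nat.mul_le_mul (by omega) (Nat.mul_le_mul_left 8 (Nat.one_le_two_pow))
  have hABΔ : A = B + Δ := by
    rw [hA, hB, hΔdef, ← Nat.add_mul]
    congr 1
    omega
  have hΔeq : Δ = 2^(k+3) * c := by
    rw [hΔdef, ← hord, hk]
    ring
  set m := b * 2^n' with hm
  have hBm : B = 8 * m := by rw [hB, hm]; ring
  have hm1 : 1 ≤ m := by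
    rw [hm]
    exact Nat.one_le_iff_ne_zero.mpr (by positivity)
  -- odd part
  obtain ⟨wO, hwO, hO⟩ := O_form k c m hc
  rw [← hΔeq, ← hBm] at hO
  -- even part
  obtain ⟨r3n, hr3n⟩ := pow_16 410 m
  have h3B : (3:ℤ)^B = 1 + 16*(r3n:ℤ) := by
    have hn3 : (3:ℕ)^B = 1 + 16*r3n := by
      rw [hBm, pow_mul]; norm_num at hr3n ⊢; exact hr3n
    exact_mod_cast congrArg (Nat.cast (R := ℤ)) hn3
  set q := B - 3 with hq
  have h2B : (2:ℤ)^B = 8 * 2^q := by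
    rw [show B = q + 3 by omega, pow_add]; ring
  set d := Δ - 4 with hd
  have hΔ2 : (2:ℤ)^Δ = 16 * 2^d := by
    rw [show Δ = d + 4 by omega, pow_add]; ring
  obtain ⟨wE, hwE, hE⟩ := E_form B Δ (r3n:ℤ) q d h3B h2B hΔ2
  -- key identity
  set S : ℤ := (stirling A 7 : ℤ) - stirling B 7 with hS
  obtain ⟨_, _, _, _, _, _, fA⟩ := stirling_formula A (by omega)
  obtain ⟨_, _, _, _, _, _, fB⟩ := stirling_formula B (by omega)
  have pA : ∀ u:ℤ, u^A = u^B * u^Δ := fun u => by rw [hABΔ, pow_add]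
  have key : (5040:ℤ) * S = 2^(k+8)*wO - 2^(B+2)*wE := by
    calc (5040:ℤ)*S
        = (7^A - 7^B) - 7*(6^A-6^B) + 21*(5^A-5^B) - 35*(4^A-4^B)
          + 35*(3^A-3^B) - 21*(2^A-2^B) := by
          rw [hS, mul_sub, fA, fB]; ring
      _ = (7^B*((7:ℤ)^Δ-1) + 21*5^B*(5^Δ-1) + 35*3^B*(3^Δ-1))
          - (7*6^B*((6:ℤ)^Δ-1) + 35*4^B*(4^Δ-1) + 21*2^B*(2^Δ-1)) := by
          rw [pA 7, pA 6, pA 5, pA 4, pA 3, pA 2]; ring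
      _ = 2^(k+8)*wO - 2^(B+2)*wE := by rw [hO, hE]
  have hSne : S ≠ 0 := by
    have hlt : stirling B 7 < stirling A 7 := by
      have := stirling_seven_lt (m := B) (by omega) (Δ - 1)
      rwa [show B + (Δ - 1 + 1) = A by omega] at this
    rw [hS]
    exact sub_ne_zero_of_ne (by exact_mod_cast hlt.ne')
  refine ⟨?_, ?_, ?_⟩
  · -- case B > k + 6
    intro h
    have hBk : k + 7 ≤ B := by omega
    set j := B - k - 7 with hj
    have h315 : (315:ℤ)*S = 2^(k+4)*(wO - 2*(2^j*wE)) := by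
      apply mul_left_cancel₀ (show (16:ℤ) ≠ 0 by norm_num)
      calc (16:ℤ)*(315*S) = 5040*S := by ring
        _ = 2^(k+8)*wO - 2^(B+2)*wE := key
        _ = 2^(k+8)*wO - 2^(k+9+j)*wE := by rw [show B + 2 = k+9+j by omega]
        _ = 16*(2^(k+4)*(wO - 2*(2^j*wE))) := by ring
    have := val_315 S (k+4) _ (hwO.sub_even (even_two_mul _)) h315
    omega
  · -- case B = k + 6
    intro h
    have hBk : B = k + 6 := by omega
    obtain ⟨o1, ho1⟩ := hwO
    obtain ⟨o2, ho2⟩ := hwE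
    have h315 : (315:ℤ)*S = 2^(k+5)*(o1 - o2) := by
      apply mul_left_cancel₀ (show (16:ℤ) ≠ 0 by norm_num)
      calc (16:ℤ)*(315*S) = 5040*S := by ring
        _ = 2^(k+8)*wO - 2^(B+2)*wE := key
        _ = 2^(k+8)*(2*o1+1) - 2^(k+8)*(2*o2+1) := by rw [hBk, ← ho1, ← ho2]
        _ = 16*(2^(k+5)*(o1 - o2)) := by ring
    have hdvd : (2:ℤ)^(k+5) ∣ S := by
      have hcop : IsCoprime ((2:ℤ)^(k+5)) 315 := by
        apply IsCoprime.pow_left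
        rw [Int.isCoprime_iff_gcd_eq_one]
        norm_num
      exact hcop.dvd_of_dvd_mul_left ⟨o1 - o2, by linarith [h315]⟩
    have hle : k + 5 ≤ padicValInt 2 S := by
      have := (padicValInt_dvd_iff (p := 2) (k+5) S).mp (by exact_mod_cast hdvd)
      rcases this with h0 | hle
      · exact absurd h0 hSne
      · exact hle
    omega
  · -- case B < k + 6
    intro h
    have hBk : B ≤ k + 5 := by omega
    set j := k + 5 - B with hj
    have h315 : (315:ℤ)*S = 2^(B-2)*(2*(2^j*wO) - wE) := by
      apply mul_left_cancel₀ (show (16:ℤ) ≠ 0 by norm_num)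
      calc (16:ℤ)*(315*S) = 5040*S := by ring
        _ = 2^(k+8)*wO - 2^(B+2)*wE := key
        _ = 2^(B-2+5+j)*wO - 2^(B-2+4)*wE := by
            rw [show k+8 = B-2+5+j by omega, show B+2 = B-2+4 by omega]
        _ = 16*(2^(B-2)*(2*(2^j*wO) - wE)) := by ring
    have := val_315 S (B-2) _ ((even_two_mul _).sub_odd hwE) h315
    omega
end

section
/- Let c be an odd positive integer, and for natural numbers n ≥ m, let L₂' = {l : 1 ≤ l ≤ c·2^{n−m+1} − 1, ν₂(l) = n−m+1, and s₂(l/2^{n−m+1}) + s₂(c − l/2^{n−m+1}) = s₂(c)} and L₃' = {l : 1 ≤ l ≤ c·2^{n−m+1} − 1, ν₂(l) > n−m+1, and s₂(l/2^{n−m+1}) + s₂(c − l/2^{n−m+1}) = s₂(c)}. Then the map l ↦ c·2^{n−m+1} − l is a bijection from L₂' to L₃', and in particular |L₂'| = |L₃'|. -/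
/-! Every `l` in either set is `2^k a` with `0 < a < c`, and `l ↦ c 2^k - l` becomes `a ↦ c - a`.
This involution keeps the condition `s₂(a) + s₂(c - a) = s₂(c)`, which is symmetric in `a` and
`c - a`, and since `c` is odd it exchanges odd `a` (`ν₂(l) = k`) with even `a` (`ν₂(l) > k`). -/

/-- `reflSet c k (· = k)` and `reflSet c k (k < ·)` are the paper's `L₂'` and `L₃'`, `k = n - m + 1`. -/
def reflSet (c k : ℕ) (P : ℕ → Prop) : Set ℕ :=
  {l | 1 ≤ l ∧ l ≤ c * 2 ^ k - 1 ∧ P (padicValNat 2 l) ∧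
    s2 (l / 2 ^ k) + s2 (c - l / 2 ^ k) = s2 c}

lemma padicValNat_two_pow_mul (k : ℕ) {a : ℕ} (ha : a ≠ 0) :
    padicValNat 2 (2 ^ k * a) = k + padicValNat 2 a := by
  rw [padicValNat.mul (by positivity) ha, padicValNat.prime_pow]

lemma padicValNat_two_pos_iff_even {a : ℕ} (ha : a ≠ 0) : 0 < padicValNat 2 a ↔ Even a := by
  rw [pos_iff_ne_zero, ← dvd_iff_padicValNat_ne_zero ha, even_iff_two_dvd]

section reflSet

variable {c k : ℕ} {P Q : ℕ → Prop}

lemma two_pow_mul_mem_reflSet_iff {a : ℕ} (ha : a ≠ 0) :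
    2 ^ k * a ∈ reflSet c k P ↔
      a < c ∧ P (k + padicValNat 2 a) ∧ s2 a + s2 (c - a) = s2 c := by
  have hk : 0 < 2 ^ k := by positivity
  have hlt : 2 ^ k * a ≤ c * 2 ^ k - 1 ↔ a < c := by
    have hpos : 0 < 2 ^ k * a := by positivity
    rw [mul_comm c, ← Nat.mul_lt_mul_left hk]
    omega
  simp only [reflSet, Set.mem_ofPred_eq, Nat.mul_div_cancel_left _ hk,
    padicValNat_two_pow_mul k ha, hlt, Nat.one_le_iff_ne_zero, mul_ne_zero_iff,
    hk.ne', ha, ne_eq, not_false_eq_true, and_self, true_and]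

lemma exists_eq_two_pow_mul_of_mem_reflSet (hP : ∀ v, P v → k ≤ v) {l : ℕ}
    (hl : l ∈ reflSet c k P) : ∃ a ≠ 0, l = 2 ^ k * a := by
  obtain ⟨a, rfl⟩ := (pow_dvd_pow 2 (hP _ hl.2.2.1)).trans pow_padicValNat_dvd
  exact ⟨a, by rintro rfl; simp [reflSet] at hl, rfl⟩

lemma invOn_sub_reflSet :
    Set.InvOn (fun l => c * 2 ^ k - l) (fun l => c * 2 ^ k - l) (reflSet c k P) (reflSet c k Q) :=
  ⟨fun _ hl => Nat.sub_sub_self (hl.2.1.trans (Nat.sub_le _ _)),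
    fun _ hl => Nat.sub_sub_self (hl.2.1.trans (Nat.sub_le _ _))⟩

lemma mapsTo_sub_reflSet (hP : ∀ v, P v → k ≤ v)
    (hPQ : ∀ a, 0 < a → a < c → P (k + padicValNat 2 a) → Q (k + padicValNat 2 (c - a))) :
    Set.MapsTo (fun l => c * 2 ^ k - l) (reflSet c k P) (reflSet c k Q) := by
  intro l hl
  obtain ⟨a, ha, rfl⟩ := exists_eq_two_pow_mul_of_mem_reflSet hP hl
  obtain ⟨hac, hPa, hs⟩ := (two_pow_mul_mem_reflSet_iff ha).1 hl
  have hsub : c * 2 ^ k - 2 ^ k * a = 2 ^ k * (c - a) := by rw [Nat.mul_sub, mul_comm c]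
  simp only [hsub]
  refine (two_pow_mul_mem_reflSet_iff (Nat.sub_ne_zero_of_lt hac)).2
    ⟨Nat.sub_lt (by omega) (by omega), hPQ a (by omega) hac hPa, ?_⟩
  rwa [Nat.sub_sub_self hac.le, add_comm]

end reflSet

theorem bijOn_sub_reflSet {c : ℕ} (hc : Odd c) (k : ℕ) :
    Set.BijOn (fun l => c * 2 ^ k - l) (reflSet c k (· = k)) (reflSet c k (k < ·)) := by
  refine invOn_sub_reflSet.bijOn (mapsTo_sub_reflSet (fun _ => ge_of_eq) ?_)
    (mapsTo_sub_reflSet (fun _ => le_of_lt) ?_)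
  · intro a ha hac hv
    have hodd : ¬Even a := by rw [← padicValNat_two_pos_iff_even ha.ne']; omega
    have heven : 0 < padicValNat 2 (c - a) :=
      (padicValNat_two_pos_iff_even (by omega)).2 (Nat.Odd.sub_odd hc (Nat.not_even_iff_odd.1 hodd))
    omega
  · intro a ha hac hv
    have heven : Even a := (padicValNat_two_pos_iff_even ha.ne').1 (by omega)
    have hodd : ¬0 < padicValNat 2 (c - a) := by
      rw [padicValNat_two_pos_iff_even (by omega), Nat.not_even_iff_odd]
      exact Nat.Odd.sub_even hac.le hc heven
    omega

theorem bijOn_L2_L3_general (c n m : ℕ) (hcodd : Odd c) :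
    Set.BijOn (fun l => c * 2 ^ (n - m + 1) - l)
      {l : ℕ | 1 ≤ l ∧ l ≤ c * 2 ^ (n - m + 1) - 1 ∧ padicValNat 2 l = n - m + 1 ∧
        s2 (l / 2 ^ (n - m + 1)) + s2 (c - l / 2 ^ (n - m + 1)) = s2 c}
      {l : ℕ | 1 ≤ l ∧ l ≤ c * 2 ^ (n - m + 1) - 1 ∧ n - m + 1 < padicValNat 2 l ∧
        s2 (l / 2 ^ (n - m + 1)) + s2 (c - l / 2 ^ (n - m + 1)) = s2 c} ∧
    {l : ℕ | 1 ≤ l ∧ l ≤ c * 2 ^ (n - m + 1) - 1 ∧ padicValNat 2 l = n - m + 1 ∧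
        s2 (l / 2 ^ (n - m + 1)) + s2 (c - l / 2 ^ (n - m + 1)) = s2 c}.ncard =
    {l : ℕ | 1 ≤ l ∧ l ≤ c * 2 ^ (n - m + 1) - 1 ∧ n - m + 1 < padicValNat 2 l ∧
        s2 (l / 2 ^ (n - m + 1)) + s2 (c - l / 2 ^ (n - m + 1)) = s2 c}.ncard :=
  have h := bijOn_sub_reflSet hcodd (n - m + 1)
  ⟨h, h.ncard_eq⟩

theorem bijOn_L2_L3 (c n m : ℕ) (hc : 0 < c) (hcodd : Odd c) (hmn : m ≤ n) :
    Set.BijOn (fun l => c * 2 ^ (n - m + 1) - l)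
      {l : ℕ | 1 ≤ l ∧ l ≤ c * 2 ^ (n - m + 1) - 1 ∧ padicValNat 2 l = n - m + 1 ∧
        s2 (l / 2 ^ (n - m + 1)) + s2 (c - l / 2 ^ (n - m + 1)) = s2 c}
      {l : ℕ | 1 ≤ l ∧ l ≤ c * 2 ^ (n - m + 1) - 1 ∧ n - m + 1 < padicValNat 2 l ∧
        s2 (l / 2 ^ (n - m + 1)) + s2 (c - l / 2 ^ (n - m + 1)) = s2 c} ∧
    {l : ℕ | 1 ≤ l ∧ l ≤ c * 2 ^ (n - m + 1) - 1 ∧ padicValNat 2 l = n - m + 1 ∧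
        s2 (l / 2 ^ (n - m + 1)) + s2 (c - l / 2 ^ (n - m + 1)) = s2 c}.ncard =
    {l : ℕ | 1 ≤ l ∧ l ≤ c * 2 ^ (n - m + 1) - 1 ∧ n - m + 1 < padicValNat 2 l ∧
        s2 (l / 2 ^ (n - m + 1)) + s2 (c - l / 2 ^ (n - m + 1)) = s2 c}.ncard :=
  bijOn_L2_L3_general c n m hcodd
end
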